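/- arXiv:1910.06850 — 12 statements merged into one kernel-verified Lean document; each statement's English description precedes it below -/
import Mathlib

section
/- For every nonnegative integer n, the central trinomial coefficient T_n satisfies T_n = Σ_{k=0}^{n} C(n,k)·C(2k,k)·(-1)^k·3^{n-k}. -/
open Polynomial

/-- The central trinomial coefficient: coefficient of `x^n` in `(1+x+x^2)^n`. -/
noncomputable def centralTrinomial (n : ℕ) : ℤ :=
  ((1 + Polynomial.X + Polynomial.X ^ 2 : Polynomial ℤ) ^ n).coeff n

theorem centralTrinomial_eq_alt_sum (n : ℕ) :
    centralTrinomial n =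
      ∑ k ∈ Finset.range (n + 1),
        (-1 : ℤ) ^ k * n.choose k * (2 * k).choose k * 3 ^ (n - k) := by
  have h : (1 + X + X ^ 2 : ℤ[X]) ^ n = ((X + C (-1)) ^ 2 + 3 * X) ^ n := by
    ring_nf
    simp only [map_neg, map_one]
    ring
  rw [centralTrinomial, h, add_pow, Polynomial.finset_sum_coeff]
  refine Finset.sum_congr rfl fun k hk => ?_
  have hk' : k ≤ n := Nat.lt_succ_iff.mp (Finset.mem_range.mp hk)
  have : ((X + C (-1) : ℤ[X]) ^ 2) ^ k * (3 * X) ^ (n - k) * (n.choose k : ℤ[X])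
      = C ((3:ℤ) ^ (n - k) * (n.choose k : ℤ)) * ((X + C (-1)) ^ (2 * k) * X ^ (n - k)) := by
    rw [pow_mul]
    simp only [map_neg, map_one, map_mul, map_pow, map_ofNat, Polynomial.C_eq_natCast]
    ring
  rw [this, coeff_C_mul, mul_assoc, coeff_mul_X_pow', if_pos (Nat.sub_le n k)]
  have hnk : n - (n - k) = k := Nat.sub_sub_self hk'
  rw [hnk, coeff_X_add_C_pow]
  have h2 : 2 * k - k = k := by omega
  rw [h2]

  ring
end

section
/- For all nonnegative integers n and j, Σ_{k=j}^{n} C(2k,k)·C(k,j)/4^k = (n+1)/(2^{2n+1}·(2j+1)) · C(n,j)·C(2n+2,n+1). -/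
theorem sum_centralBinom_choose_div_four_pow (n j : ℕ) :
    ∑ k ∈ Finset.Icc j n, ((2 * k).choose k * k.choose j : ℚ) / 4 ^ k =
      ((n : ℚ) + 1) / (2 ^ (2 * n + 1) * (2 * j + 1)) *
        (n.choose j * (2 * n + 2).choose (n + 1)) := by
  induction n with
  | zero =>
    cases j with
    | zero => norm_num
    | succ j => simp [Finset.Icc_eq_empty_of_lt, Nat.choose_eq_zero_of_lt]
  | succ n ih =>
    rcases le_or_gt j (n + 1) with hj | hj
    · rw [Finset.sum_Icc_succ_top (by omega : j ≤ n + 1), ih]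
      -- key nat facts
      have h1 : ((n + 2 : ℕ)) * (2 * (n + 2)).choose (n + 2)
          = 2 * (2 * (n + 1) + 1) * (2 * (n + 1)).choose (n + 1) :=
        Nat.succ_mul_centralBinom_succ (n + 1)
      have h2 : (n.choose j) * (n + 1) = ((n + 1).choose j) * (n + 1 - j) :=
        Nat.choose_mul_succ_eq n j
      have e1 : ((2 * (n + 1) + 2).choose (n + 1 + 1) : ℚ)
          = 2 * (2 * (n : ℚ) + 3) * ((2 * (n + 1)).choose (n + 1)) / ((n : ℚ) + 2) := by
        have : (2 * (n + 1) + 2) = 2 * (n + 2) := by ring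
        rw [this]
        have := congrArg (Nat.cast (R := ℚ)) h1
        push_cast at this
        field_simp
        linarith [this]
      have e2 : ((2 * n + 2).choose (n + 1) : ℚ) = ((2 * (n + 1)).choose (n + 1) : ℚ) := by
        norm_num [two_mul]; ring_nf
      have e3 : ((n.choose j : ℚ)) * ((n : ℚ) + 1) = ((n + 1).choose j : ℚ) * ((n : ℚ) + 1 - j) := by
        have := congrArg (Nat.cast (R := ℚ)) h2
        push_cast [Nat.cast_sub hj] at this
        convert this using 2
      rw [e1, e2]
      have hj' : (0 : ℚ) < 2 * j + 1 := by positivity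
      have hn2 : ((n : ℚ) + 2) ≠ 0 := by positivity
      field_simp
      rw [show (4 : ℚ) = 2 ^ 2 by norm_num, ← pow_mul]
      have e4 : ((n.choose j : ℚ)) = (((n + 1).choose j : ℚ) * ((n : ℚ) + 1 - j)) / ((n : ℚ) + 1) := by
        field_simp; linarith [e3]
      rw [e4]
      field_simp
      push_cast
      ring
    · rw [Finset.Icc_eq_empty_of_lt hj, Nat.choose_eq_zero_of_lt hj]
      simp
end

section
/- For all nonnegative integers n and j, Σ_{k=j}^{n} C(k,j)·H_k = C(n+1,j+1)·(H_{n+1} − 1/(j+1)), where H_m = Σ_{i=1}^{m} 1/i is the m-th harmonic number (H_0 = 0). -/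
/-! Since `C(k, j) = 0` for `k < j`, the sum may run over all `k < n + 1`. Induction on the upper
limit then only needs Pascal's rule and the absorption identity
`C(n, j) / (j + 1) = C(n + 1, j + 1) / (n + 1)`, which accounts for the new term `1 / (n + 1)`
of the harmonic number. -/

open Finset

theorem Nat.cast_choose_div_add_one {K : Type*} [Field K] [CharZero K] (n k : ℕ) :
    (n.choose k : K) / (k + 1) = ((n + 1).choose (k + 1) : K) / (n + 1) := by
  rw [div_eq_div_iff (Nat.cast_add_one_ne_zero k) (Nat.cast_add_one_ne_zero n), mul_comm]
  exact_mod_cast Nat.add_one_mul_choose_eq n k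

theorem sum_range_choose_mul_harmonic (n j : ℕ) :
    ∑ k ∈ range n, (k.choose j : ℚ) * harmonic k =
      (n.choose (j + 1) : ℚ) * (harmonic n - 1 / (j + 1)) := by
  induction n with
  | zero => simp
  | succ n ih =>
    have pascal : ((n + 1).choose (j + 1) : ℚ) = n.choose j + n.choose (j + 1) := by
      exact_mod_cast Nat.choose_succ_succ' n j
    have absorb := Nat.cast_choose_div_add_one (K := ℚ) n j
    rw [sum_range_succ, ih, harmonic_succ, pascal]
    push_cast at absorb ⊢
    rw [pascal] at absorb
    linear_combination absorb

theorem sum_choose_mul_harmonic (n j : ℕ) :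
    ∑ k ∈ Finset.Icc j n, (k.choose j : ℚ) * harmonic k =
      ((n + 1).choose (j + 1) : ℚ) * (harmonic (n + 1) - 1 / (j + 1)) := by
  rw [← sum_range_choose_mul_harmonic]
  refine sum_subset (fun k hk => mem_range.2 (Nat.lt_succ_of_le (mem_Icc.1 hk).2)) ?_
  intro k hk hk'
  have hkj : k < j := by
    simp only [mem_range, mem_Icc] at hk hk'
    omega
  simp [Nat.choose_eq_zero_of_lt hkj]
end

section
/- For every nonnegative integer n, Σ_{k=0}^{n} (C(n,k)·H_k/(k+1))·(−4/3)^k = ((−3 + (−1/3)^n)·H_n)/(4(n+1)) − (Σ_{k=1}^{n} (−3)^k/k)/(4·(−3)^n·(n+1)) + (3·Σ_{k=1}^{n} 1/(k·(−3)^k))/(4(n+1)). -/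
open Finset

lemma binom_aux (x : ℚ) (m : ℕ) :
    ∑ k ∈ range (m + 1), (m.choose k : ℚ) * x ^ k = (1 + x) ^ m := by
  rw [add_comm 1 x, add_pow]
  simp [mul_comm]

-- (5'): sum of C(m+1,k+1) x^(k+1)
lemma binom_shift (x : ℚ) (m : ℕ) :
    ∑ k ∈ range (m + 1), ((m + 1).choose (k + 1) : ℚ) * x ^ (k + 1)
      = (1 + x) ^ (m + 1) - 1 := by
  have h := binom_aux x (m + 1)
  rw [Finset.sum_range_succ'] at h
  simp at h
  linarith [h]

-- (5)
lemma div_sum (x : ℚ) (m : ℕ) :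
    ∑ k ∈ range (m + 1), (m.choose k : ℚ) * x ^ (k + 1) / (k + 1)
      = ((1 + x) ^ (m + 1) - 1) / (m + 1) := by
  rw [eq_div_iff (by positivity)]
  rw [← binom_shift x m, Finset.sum_mul]
  refine Finset.sum_congr rfl fun k _ => ?_
  have h : ((m + 1).choose (k + 1) : ℚ) * (k + 1) = (m + 1) * (m.choose k : ℚ) := by
    exact_mod_cast congrArg (Nat.cast : ℕ → ℚ) (Nat.add_one_mul_choose_eq m k).symm
  rw [div_mul_eq_mul_div, div_eq_iff (by positivity : ((k : ℚ) + 1) ≠ 0)]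
  linear_combination (-(x ^ (k + 1))) * h

-- shift lemma (3)
lemma shift_T (x : ℚ) (m : ℕ) :
    ∑ k ∈ range (m + 1), (m.choose (k + 1) : ℚ) * harmonic (k + 1) * x ^ (k + 1)
      = ∑ k ∈ range (m + 1), (m.choose k : ℚ) * harmonic k * x ^ k := by
  have h := Finset.sum_range_succ' (fun k => (m.choose k : ℚ) * harmonic k * x ^ k) (m + 1)
  rw [Finset.sum_range_succ (fun k => (m.choose k : ℚ) * harmonic k * x ^ k) (m + 1)] at h
  simp only [Nat.choose_succ_self, Nat.cast_zero, zero_mul, harmonic_zero, mul_zero,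
    mul_one, pow_zero, add_zero, Nat.choose_zero_right, Nat.cast_one, one_mul] at h
  linarith [h]

lemma T_rec (x : ℚ) (m : ℕ) :
    ∑ k ∈ range (m + 2), ((m + 1).choose k : ℚ) * harmonic k * x ^ k
      = (1 + x) * ∑ k ∈ range (m + 1), (m.choose k : ℚ) * harmonic k * x ^ k
        + ((1 + x) ^ (m + 1) - 1) / (m + 1) := by
  rw [Finset.sum_range_succ']
  simp only [harmonic_zero, mul_zero, zero_mul, pow_zero, mul_one, add_zero]
  have step : ∀ k ∈ range (m + 1),
      ((m + 1).choose (k + 1) : ℚ) * harmonic (k + 1) * x ^ (k + 1)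
        = (m.choose k : ℚ) * harmonic k * x ^ (k + 1)
          + (m.choose k : ℚ) * x ^ (k + 1) / (k + 1)
          + (m.choose (k + 1) : ℚ) * harmonic (k + 1) * x ^ (k + 1) := by
    intro k _
    have hc : (((m + 1).choose (k + 1) : ℕ) : ℚ) = (m.choose k : ℚ) + (m.choose (k + 1) : ℚ) := by
      exact_mod_cast congrArg (Nat.cast : ℕ → ℚ) (Nat.choose_succ_succ m k)
    rw [harmonic_succ, hc]
    have hk : ((k : ℚ) + 1) ≠ 0 := by positivity
    push_cast
    field_simp
  rw [Finset.sum_congr rfl step, Finset.sum_add_distrib, Finset.sum_add_distrib,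
    shift_T, div_sum]
  have : ∑ k ∈ range (m + 1), (m.choose k : ℚ) * harmonic k * x ^ (k + 1)
      = x * ∑ k ∈ range (m + 1), (m.choose k : ℚ) * harmonic k * x ^ k := by
    rw [Finset.mul_sum]
    exact Finset.sum_congr rfl fun k _ => by ring
  rw [this]; ring

lemma T_closed (n : ℕ) :
    ∑ k ∈ range (n + 1), (n.choose k : ℚ) * harmonic k * (-4 / 3) ^ k
      = (-1 / 3 : ℚ) ^ n * (harmonic n - ∑ k ∈ Finset.Icc 1 n, (-3 : ℚ) ^ k / k) := by
  induction n with
  | zero => simp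
  | succ m ih =>
    have h13 : (1 + (-4 / 3 : ℚ)) = -1 / 3 := by norm_num
    rw [T_rec, ih, h13, harmonic_succ, Finset.sum_Icc_succ_top (by omega),
      pow_succ, pow_succ]
    have hq : (-1 / 3 : ℚ) ^ m = ((-3 : ℚ) ^ m)⁻¹ := by
      rw [← inv_pow]; norm_num
    rw [hq]
    have hm : ((m : ℚ) + 1) ≠ 0 := by positivity
    have hp : ((-3 : ℚ) ^ m) ≠ 0 := pow_ne_zero _ (by norm_num)
    push_cast
    field_simp
    ring

lemma key (n : ℕ) :
    ((n : ℚ) + 1) * ∑ k ∈ range (n + 1), ((n.choose k : ℚ) * harmonic k / (k + 1)) * (-4 / 3) ^ k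
      = ∑ k ∈ range (n + 1), ((n + 1).choose (k + 1) : ℚ) * harmonic k * (-4 / 3) ^ k := by
  rw [Finset.mul_sum]
  refine Finset.sum_congr rfl fun k _ => ?_
  have h : (((n + 1).choose (k + 1) : ℕ) : ℚ) * ((k : ℚ) + 1) = ((n : ℚ) + 1) * (n.choose k : ℚ) := by
    exact_mod_cast congrArg (Nat.cast : ℕ → ℚ) (Nat.add_one_mul_choose_eq n k).symm
  have hk : ((k : ℚ) + 1) ≠ 0 := by positivity
  rw [div_mul_eq_mul_div, mul_div_assoc', div_eq_iff hk]
  linear_combination (-(harmonic k * (-4 / 3 : ℚ) ^ k)) * h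

lemma Q_rec (n : ℕ) :
    ∑ k ∈ range (n + 2), ((n + 2).choose (k + 1) : ℚ) * harmonic k * (-4 / 3) ^ k
      = ∑ k ∈ range (n + 1), ((n + 1).choose (k + 1) : ℚ) * harmonic k * (-4 / 3) ^ k
        + ∑ k ∈ range (n + 2), ((n + 1).choose k : ℚ) * harmonic k * (-4 / 3) ^ k := by
  have step : ∀ k ∈ range (n + 2),
      ((n + 2).choose (k + 1) : ℚ) * harmonic k * (-4 / 3) ^ k
        = ((n + 1).choose (k + 1) : ℚ) * harmonic k * (-4 / 3) ^ k
          + ((n + 1).choose k : ℚ) * harmonic k * (-4 / 3) ^ k := by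
    intro k _
    have hc : (((n + 2).choose (k + 1) : ℕ) : ℚ)
        = ((n + 1).choose k : ℚ) + ((n + 1).choose (k + 1) : ℚ) := by
      exact_mod_cast congrArg (Nat.cast : ℕ → ℚ) (Nat.choose_succ_succ (n + 1) k)
    rw [hc]; ring
  rw [Finset.sum_congr rfl step, Finset.sum_add_distrib,
    Finset.sum_range_succ (fun k => ((n + 1).choose (k + 1) : ℚ) * harmonic k * (-4 / 3) ^ k)]
  simp [Nat.choose_succ_self]

theorem sum_choose_harmonic_neg_four_thirds (n : ℕ) :
    ∑ k ∈ Finset.range (n + 1), ((n.choose k : ℚ) * harmonic k / (k + 1)) * (-4 / 3) ^ k =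
      ((-3 + (-1 / 3 : ℚ) ^ n) * harmonic n) / (4 * (n + 1)) -
        (∑ k ∈ Finset.Icc 1 n, (-3 : ℚ) ^ k / k) / (4 * (-3) ^ n * (n + 1)) +
        (3 * ∑ k ∈ Finset.Icc 1 n, (1 : ℚ) / (k * (-3) ^ k)) / (4 * (n + 1)) := by
  induction n with
  | zero => simp
  | succ m ih =>
    have k1 := key (m + 1)
    have k0 := key m
    have qr := Q_rec m
    have tc := T_closed (m + 1)
    have hne : ((m : ℚ) + 1 + 1) ≠ 0 := by positivity
    push_cast at k1
    refine mul_left_cancel₀ hne ?_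
    rw [k1, qr, ← k0, ih, tc]
    have hq : (-1 / 3 : ℚ) ^ m = ((-3 : ℚ) ^ m)⁻¹ := by
      rw [← inv_pow]; norm_num
    rw [harmonic_succ, Finset.sum_Icc_succ_top (by omega : 1 ≤ m + 1),
      Finset.sum_Icc_succ_top (by omega : 1 ≤ m + 1), pow_succ, pow_succ, hq]
    have hm : ((m : ℚ) + 1) ≠ 0 := by positivity
    have hp : ((-3 : ℚ) ^ m) ≠ 0 := pow_ne_zero _ (by norm_num)
    push_cast
    field_simp
    ring
end

section
/- For any prime p > 3, Σ_{k=1}^{(p−1)/2} (−3)^k/k ≡ −2·q_p(2) (mod p), where q_p(2) = (2^{p−1} − 1)/p is the Fermat quotient. -/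
/-!
Since `(1 ± √-3)³ = -8` and `p ≡ ±1 (mod 6)`, we get `(1 + √-3)^p + (1 - √-3)^p = 2^p`, and the
binomial expansion turns this into `2^(p-1) - 1 = ∑_{j=1}^{(p-1)/2} C(p, 2j) (-3)^j`. For `0 < k < p`,
`k C(p, k) = p C(p-1, k-1)` and `C(p-1, k-1) ≡ (-1)^(k-1) (mod p)`, so `C(p, k) / p ≡ (-1)^(k-1) / k`.
Dividing the identity by `p` and reducing mod `p` gives `q_p(2) ≡ -½ ∑_{j} (-3)^j / j`.
-/

open Finset

theorem Finset.sum_range_two_mul {M : Type*} [AddCommMonoid M] (f : ℕ → M) (n : ℕ) :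
    ∑ k ∈ range (2 * n), f k = ∑ j ∈ range n, (f (2 * j) + f (2 * j + 1)) := by
  induction n with
  | zero => simp
  | succ n ih => rw [Nat.mul_succ, sum_range_succ, sum_range_succ, sum_range_succ, ih, add_assoc]

theorem one_add_pow_add_one_sub_pow {R : Type*} [CommRing R] (x : R) (n : ℕ) :
    (1 + x) ^ n + (1 - x) ^ n = 2 * ∑ j ∈ range (n / 2 + 1), x ^ (2 * j) * n.choose (2 * j) := by
  have hbinom (y : R) : (1 + y) ^ n = ∑ k ∈ range (2 * (n / 2 + 1)), y ^ k * n.choose k := by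
    rw [add_comm 1 y, add_pow]
    simp only [one_pow, mul_one]
    exact sum_subset (range_subset_range.2 (show n + 1 ≤ 2 * (n / 2 + 1) by omega))
      fun k _ hk => by simp [Nat.choose_eq_zero_of_lt (by simpa using hk : n < k)]
  rw [sub_eq_add_neg, hbinom, hbinom, ← sum_add_distrib, sum_range_two_mul, mul_sum]
  refine sum_congr rfl fun j _ => ?_
  rw [(even_two_mul j).neg_pow, (odd_two_mul_add_one j).neg_pow]
  ring

theorem Nat.Coprime.mod_six_eq {n : ℕ} (hn : n.Coprime 6) : n % 6 = 1 ∨ n % 6 = 5 := by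
  have h : (n % 6).gcd 6 = 1 := by rw [← Nat.gcd_rec]; exact hn.symm
  have : n % 6 < 6 := Nat.mod_lt _ (by norm_num)
  interval_cases n % 6 <;> simp_all

theorem Nat.Prime.coprime_six {p : ℕ} (hp : p.Prime) (hp3 : 3 < p) : p.Coprime 6 :=
  Nat.Coprime.mul_right ((Nat.coprime_primes hp Nat.prime_two).2 (by omega))
    ((Nat.coprime_primes hp Nat.prime_three).2 (by omega))

theorem Zsqrtd.one_add_sqrtd_pow_add_one_sub_sqrtd_pow {n : ℕ} (hn : n.Coprime 6) :
    (1 + sqrtd : ℤ√(-3)) ^ n + (1 - sqrtd) ^ n = 2 ^ n := by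
  have hpow (a : ℤ√(-3)) (ha : a ^ 3 = -8) : a ^ n = 64 ^ (n / 6) * a ^ (n % 6) := by
    have ha6 : a ^ 6 = 64 := by rw [show 6 = 3 * 2 by rfl, pow_mul, ha]; norm_num
    nth_rw 1 [← Nat.div_add_mod n 6]
    rw [pow_add, pow_mul, ha6]
  have hrem : (1 + sqrtd : ℤ√(-3)) ^ (n % 6) + (1 - sqrtd) ^ (n % 6) = 2 ^ (n % 6) := by
    rcases hn.mod_six_eq with h | h <;> rw [h] <;> decide
  rw [hpow _ (by decide), hpow _ (by decide), ← mul_add, hrem]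
  conv_rhs => rw [← Nat.div_add_mod n 6, pow_add, pow_mul]
  norm_num

theorem two_mul_sum_neg_three_pow_mul_choose_two_mul {n : ℕ} (hn : n.Coprime 6) :
    2 * ∑ j ∈ range (n / 2 + 1), (-3) ^ j * (n.choose (2 * j) : ℤ) = 2 ^ n := by
  have h := Zsqrtd.one_add_sqrtd_pow_add_one_sub_sqrtd_pow hn
  rw [one_add_pow_add_one_sub_pow] at h
  simp_rw [pow_mul, sq, Zsqrtd.dmuld] at h
  exact_mod_cast h

theorem two_pow_sub_one_sub_one_eq_mul_sum {p : ℕ} (hp : p.Prime) (hp3 : 3 < p) :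
    (2 : ℤ) ^ (p - 1) - 1 =
      p * ∑ j ∈ Icc 1 ((p - 1) / 2), (-3) ^ j * ((p.choose (2 * j) / p : ℕ) : ℤ) := by
  have hodd : p % 2 = 1 := Nat.odd_iff.1 (hp.odd_of_ne_two (by omega))
  have h := two_mul_sum_neg_three_pow_mul_choose_two_mul (hp.coprime_six hp3)
  rw [range_eq_Ico, sum_eq_sum_Ico_succ_bot (by omega), Ico_add_one_right_eq_Icc,
    show p / 2 = (p - 1) / 2 by omega] at h
  have hterm : ∀ j ∈ Icc 1 ((p - 1) / 2),
      (p : ℤ) * ((-3) ^ j * ((p.choose (2 * j) / p : ℕ) : ℤ)) = (-3) ^ j * p.choose (2 * j) := by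
    intro j hj
    rw [mem_Icc] at hj
    rw [mul_left_comm, ← Nat.cast_mul,
      Nat.mul_div_cancel' (hp.dvd_choose_self (by omega) (by omega))]
  have h2p : (2 : ℤ) ^ p = 2 * 2 ^ (p - 1) := by rw [← pow_succ', Nat.sub_add_cancel hp.one_le]
  rw [mul_sum, sum_congr rfl hterm]
  simp only [zero_add, pow_zero, mul_zero, Nat.choose_zero_right, Nat.cast_one, mul_one] at h
  linarith

namespace ZMod

theorem natCast_ne_zero_of_pos_of_lt {p k : ℕ} (hk0 : 0 < k) (hk : k < p) :
    (k : ZMod p) ≠ 0 := by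
  rw [Ne, natCast_eq_zero_iff]
  exact fun h => (Nat.le_of_dvd hk0 h).not_gt hk

variable {p : ℕ} [Fact p.Prime]

theorem natCast_choose_sub_one {k : ℕ} (hk : k < p) :
    ((p - 1).choose k : ZMod p) = (-1) ^ k := by
  induction k with
  | zero => simp
  | succ k ih =>
    have hpascal : p.choose (k + 1) = (p - 1).choose k + (p - 1).choose (k + 1) := by
      conv_lhs => rw [← Nat.sub_add_cancel (Fact.out : p.Prime).one_le]
      exact Nat.choose_succ_succ _ _
    have hdvd : (p.choose (k + 1) : ZMod p) = 0 :=
      (natCast_eq_zero_iff _ _).2 ((Fact.out : p.Prime).dvd_choose_self k.succ_ne_zero hk)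
    rw [hpascal, Nat.cast_add, ih (by omega)] at hdvd
    rw [pow_succ]
    linear_combination hdvd

theorem natCast_choose_div_self {k : ℕ} (hk0 : 0 < k) (hk : k < p) :
    ((p.choose k / p : ℕ) : ZMod p) = -(-1) ^ k / k := by
  have hp : p.Prime := Fact.out
  obtain ⟨c, hc⟩ := hp.dvd_choose_self hk0.ne' hk
  have hmul : (p - 1).choose (k - 1) = c * k := by
    have := Nat.add_one_mul_choose_eq (p - 1) (k - 1)
    rw [Nat.sub_add_cancel hp.one_le, Nat.sub_add_cancel hk0, hc, mul_assoc] at this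
    exact Nat.eq_of_mul_eq_mul_left hp.pos this
  have hcast := congrArg (Nat.cast : ℕ → ZMod p) hmul
  rw [natCast_choose_sub_one (by omega), Nat.cast_mul] at hcast
  rw [hc, Nat.mul_div_cancel_left _ hp.pos, eq_div_iff (natCast_ne_zero_of_pos_of_lt hk0 hk),
    ← hcast]
  nth_rw 2 [← Nat.sub_add_cancel hk0]
  ring

end ZMod

theorem sum_neg_three_pow_div_eq_fermat_quotient (p : ℕ) (hp : p.Prime) (hp3 : 3 < p) :
    ∑ k ∈ Finset.Icc 1 ((p - 1) / 2), (-3 : ZMod p) ^ k * (k : ZMod p)⁻¹ =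
      -2 * (((2 ^ (p - 1) - 1) / p : ℤ) : ZMod p) := by
  have := Fact.mk hp
  have h2 : (2 : ZMod p) ≠ 0 := by
    exact_mod_cast ZMod.natCast_ne_zero_of_pos_of_lt two_pos (by omega : 2 < p)
  rw [two_pow_sub_one_sub_one_eq_mul_sum hp hp3,
    Int.mul_ediv_cancel_left _ (by exact_mod_cast hp.ne_zero), Int.cast_sum, mul_sum]
  refine sum_congr rfl fun j hj => ?_
  rw [mem_Icc] at hj
  have hj0 : (j : ZMod p) ≠ 0 := ZMod.natCast_ne_zero_of_pos_of_lt (by omega) (by omega)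
  rw [Int.cast_mul, Int.cast_pow, Int.cast_neg, Int.cast_ofNat, Int.cast_natCast,
    ZMod.natCast_choose_div_self (by omega) (by omega), (even_two_mul j).neg_one_pow]
  push_cast
  field_simp
end

section
/- For any prime p > 3, Σ_{k=0}^{p−1} C(2k,k)·T_k/12^k ≡ (p/3) (mod p), where T_k is the k-th central trinomial coefficient and (p/3) is the Legendre symbol. -/
instance : Fact (Nat.Prime 3) := ⟨by norm_num⟩

open Polynomial Finset

/-- Key polynomial identity: `∑ binom(m,k) (-3)^(m-k) T_k = (-1)^m binom(2m,m)`. -/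
lemma sum_trinomial_eq (m : ℕ) :
    ∑ k ∈ Finset.range (m + 1),
        (m.choose k : ℤ) * (-3) ^ (m - k) * centralTrinomial k
      = (-1) ^ m * ((2 * m).choose m : ℤ) := by
  have hb : ((1 + X + X ^ 2 : ℤ[X])) + (-3) * X = (X + Polynomial.C (-1)) ^ 2 := by
    rw [Polynomial.C_neg, Polynomial.C_1]
    ring
  have h : ∑ k ∈ Finset.range (m + 1),
      (1 + X + X ^ 2 : ℤ[X]) ^ k * ((-3) * X) ^ (m - k) * (m.choose k : ℤ[X])
      = (X + Polynomial.C (-1)) ^ (2 * m) := by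
    rw [← add_pow, hb, ← pow_mul, mul_comm 2 m]
  have h2 := congrArg (fun q : ℤ[X] => q.coeff m) h
  simp only [finset_sum_coeff] at h2
  rw [coeff_X_add_C_pow] at h2
  have hterm : ∀ k ∈ Finset.range (m + 1),
      ((1 + X + X ^ 2 : ℤ[X]) ^ k * ((-3) * X) ^ (m - k) * (m.choose k : ℤ[X])).coeff m
        = (m.choose k : ℤ) * (-3) ^ (m - k) * centralTrinomial k := by
    intro k hk
    rw [Finset.mem_range, Nat.lt_succ_iff] at hk
    have : ((1 + X + X ^ 2 : ℤ[X]) ^ k * ((-3) * X) ^ (m - k) * (m.choose k : ℤ[X]))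
        = Polynomial.C ((m.choose k : ℤ) * (-3) ^ (m - k)) *
            ((1 + X + X ^ 2 : ℤ[X]) ^ k * X ^ (m - k)) := by
      rw [mul_pow, Polynomial.C_mul, Polynomial.C_pow, Polynomial.C_neg]
      push_cast
      simp only [Polynomial.C_eq_natCast, map_ofNat]
      ring
    rw [this, coeff_C_mul, coeff_mul_X_pow']
    have hle : m - k ≤ m := Nat.sub_le m k
    rw [if_pos hle]
    have : m - (m - k) = k := Nat.sub_sub_self hk
    rw [this]
    rfl
  rw [Finset.sum_congr rfl hterm] at h2
  rw [h2]
  have : 2 * m - m = m := by omega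
  rw [this]

/-- `binom(2k,k) ≡ (-4)^k binom(p/2, k) (mod p)` for `k < p`. -/
lemma centralBinom_cast (p : ℕ) (hp : p.Prime) (hp2 : p % 2 = 1) :
    ∀ k < p, ((2 * k).choose k : ZMod p) = (-4 : ZMod p) ^ k * ((p / 2).choose k : ZMod p) := by
  haveI : Fact p.Prime := ⟨hp⟩
  have hpos : 0 < p := hp.pos
  have hm : 2 * (p / 2) + 1 = p := by omega
  have h2m : (2 : ZMod p) * ((p / 2 : ℕ) : ZMod p) = -1 := by
    have : (((2 * (p / 2) + 1 : ℕ)) : ZMod p) = ((p : ℕ) : ZMod p) := by rw [hm]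
    push_cast at this
    rw [ZMod.natCast_self] at this
    linear_combination this
  intro k
  induction k with
  | zero => intro _; simp
  | succ k ih =>
    intro hk1
    have hk : k < p := by omega
    have ihk := ih hk
    by_cases hkm : k + 1 ≤ p / 2
    · -- inductive step, both sides nonzero situation
      have hk1ne : ((k + 1 : ℕ) : ZMod p) ≠ 0 := by
        rw [Ne, ZMod.natCast_eq_zero_iff]
        intro hdvd
        have := Nat.le_of_dvd (Nat.succ_pos k) hdvd
        omega
      have hnat : ((k + 1) * ((2 * (k + 1)).choose (k + 1)) : ℕ)
          = 2 * (2 * k + 1) * ((2 * k).choose k) := by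
        have := Nat.succ_mul_centralBinom_succ k
        simpa [Nat.centralBinom] using this
      have hnat2 : ((p / 2).choose (k + 1) * (k + 1) : ℕ)
          = (p / 2).choose k * (p / 2 - k) := Nat.choose_succ_right_eq _ _
      have hZ1 : ((k + 1 : ℕ) : ZMod p) * (((2 * (k + 1)).choose (k + 1) : ℕ) : ZMod p)
          = 2 * (2 * (k : ZMod p) + 1) * (((2 * k).choose k : ℕ) : ZMod p) := by
        have := congrArg (fun n : ℕ => (n : ZMod p)) hnat
        push_cast at this
        push_cast
        linear_combination this
      have hsub : ((p / 2 - k : ℕ) : ZMod p) = ((p / 2 : ℕ) : ZMod p) - (k : ZMod p) := by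
        have hle : k ≤ p / 2 := by omega
        push_cast [Nat.cast_sub hle]
        ring
      have hZ2 : (((p / 2).choose (k + 1) : ℕ) : ZMod p) * ((k + 1 : ℕ) : ZMod p)
          = (((p / 2).choose k : ℕ) : ZMod p) * (((p / 2 : ℕ) : ZMod p) - (k : ZMod p)) := by
        have := congrArg (fun n : ℕ => (n : ZMod p)) hnat2
        push_cast at this ⊢
        rw [← hsub]
        push_cast
        linear_combination this
      apply mul_left_cancel₀ hk1ne
      push_cast
      push_cast at hZ1 hZ2 ihk
      calc ((k : ZMod p) + 1) * (((2 * (k + 1)).choose (k + 1) : ℕ) : ZMod p)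
          = 2 * (2 * (k : ZMod p) + 1) * (((2 * k).choose k : ℕ) : ZMod p) := hZ1
        _ = 2 * (2 * (k : ZMod p) + 1) * ((-4) ^ k * (((p / 2).choose k : ℕ) : ZMod p)) := by
            rw [ihk]
        _ = (k + 1) * ((-4 : ZMod p) ^ (k + 1) * (((p / 2).choose (k + 1) : ℕ) : ZMod p)) := by
            have : (2 : ZMod p) * (2 * (k : ZMod p) + 1)
                = (-4) * (((p / 2 : ℕ) : ZMod p) - (k : ZMod p)) := by
              linear_combination (2 : ZMod p) * h2m
            linear_combination ((-4 : ZMod p) ^ k * (((p / 2).choose k : ℕ) : ZMod p)) * this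
                + (4 * (-4 : ZMod p) ^ k) * hZ2
    · -- k + 1 > p / 2 : both sides vanish
      push_neg at hkm
      have hch : (p / 2).choose (k + 1) = 0 := Nat.choose_eq_zero_of_lt hkm
      have hdvd : p ∣ (2 * (k + 1)).choose (k + 1) := by
        have h := Nat.Prime.dvd_choose_add hp hk1 hk1 (by omega)
        have : k + 1 + (k + 1) = 2 * (k + 1) := by ring
        rwa [this] at h
      have : (((2 * (k + 1)).choose (k + 1) : ℕ) : ZMod p) = 0 := by
        rw [ZMod.natCast_eq_zero_iff]; exact hdvd
      rw [this, hch]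
      simp

theorem sum_centralBinom_trinomial_mod_p (p : ℕ) (hp : p.Prime) (hp3 : 3 < p) :
    ∑ k ∈ Finset.range p,
        ((2 * k).choose k : ZMod p) * (centralTrinomial k : ZMod p) * ((12 : ZMod p) ^ k)⁻¹ =
      (legendreSym 3 p : ZMod p) := by
  haveI : Fact p.Prime := ⟨hp⟩
  have hp2 : p % 2 = 1 := Nat.Prime.eq_two_or_odd hp |>.resolve_left (by omega)
  set m := p / 2 with hmdef
  have hm : 2 * m + 1 = p := by omega
  have hmp : m < p := by omega
  -- basic nonvanishing
  have h12 : (12 : ZMod p) ≠ 0 := by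
    have : ((12 : ℕ) : ZMod p) ≠ 0 := by
      rw [Ne, ZMod.natCast_eq_zero_iff]
      intro h
      have hle := Nat.le_of_dvd (by norm_num) h
      interval_cases p <;> revert h hp <;> decide
    simpa using this
  have h3 : (3 : ZMod p) ≠ 0 := by
    have : ((3 : ℕ) : ZMod p) ≠ 0 := by
      rw [Ne, ZMod.natCast_eq_zero_iff]
      intro h
      have hle := Nat.le_of_dvd (by norm_num) h
      omega
    simpa using this
  have hneg3 : (-3 : ZMod p) ≠ 0 := by simpa using neg_ne_zero.mpr h3
  have h2 : (2 : ZMod p) ≠ 0 := by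
    have : ((2 : ℕ) : ZMod p) ≠ 0 := by
      rw [Ne, ZMod.natCast_eq_zero_iff]
      intro h
      have hle := Nat.le_of_dvd (by norm_num) h
      omega
    simpa using this
  have hB := centralBinom_cast p hp hp2
  -- rewrite each term of the sum
  have hstep : ∀ k ∈ Finset.range p,
      ((2 * k).choose k : ZMod p) * (centralTrinomial k : ZMod p) * ((12 : ZMod p) ^ k)⁻¹
        = (m.choose k : ZMod p) * (centralTrinomial k : ZMod p) * ((-3 : ZMod p)⁻¹) ^ k := by
    intro k hk
    rw [Finset.mem_range] at hk
    rw [hB k hk]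
    have h12k : ((12 : ZMod p) ^ k)⁻¹ = ((12 : ZMod p)⁻¹) ^ k := by
      rw [← inv_pow]
    rw [h12k]
    have : (-4 : ZMod p) * (12 : ZMod p)⁻¹ = (-3 : ZMod p)⁻¹ := by
      field_simp
      ring
    calc (-4 : ZMod p) ^ k * (m.choose k : ZMod p) * (centralTrinomial k : ZMod p)
          * ((12 : ZMod p)⁻¹) ^ k
        = (m.choose k : ZMod p) * (centralTrinomial k : ZMod p)
            * ((-4 : ZMod p) * (12 : ZMod p)⁻¹) ^ k := by rw [mul_pow]; ring
      _ = (m.choose k : ZMod p) * (centralTrinomial k : ZMod p) * ((-3 : ZMod p)⁻¹) ^ k := by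
          rw [this]
  rw [Finset.sum_congr rfl hstep]
  -- restrict the sum to range (m+1)
  have hsum_restrict :
      ∑ k ∈ Finset.range p,
          (m.choose k : ZMod p) * (centralTrinomial k : ZMod p) * ((-3 : ZMod p)⁻¹) ^ k
        = ∑ k ∈ Finset.range (m + 1),
          (m.choose k : ZMod p) * (centralTrinomial k : ZMod p) * ((-3 : ZMod p)⁻¹) ^ k := by
    refine (Finset.sum_subset (by intro x hx; rw [Finset.mem_range] at *; omega) ?_).symm
    intro k _ hk
    rw [Finset.mem_range, Nat.lt_succ_iff, not_le] at hk
    rw [Nat.choose_eq_zero_of_lt hk]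
    simp
  rw [hsum_restrict]
  -- main computation
  set S : ZMod p := ∑ k ∈ Finset.range (m + 1),
      (m.choose k : ZMod p) * (centralTrinomial k : ZMod p) * ((-3 : ZMod p)⁻¹) ^ k with hS
  have hA := congrArg (fun z : ℤ => (z : ZMod p)) (sum_trinomial_eq m)
  push_cast at hA
  have hmul : (-3 : ZMod p) ^ m * S = (-1 : ZMod p) ^ m * ((2 * m).choose m : ZMod p) := by
    rw [hS, Finset.mul_sum, ← hA]
    refine Finset.sum_congr rfl ?_
    intro k hk
    rw [Finset.mem_range, Nat.lt_succ_iff] at hk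
    have hpow : (-3 : ZMod p) ^ m * ((-3 : ZMod p)⁻¹) ^ k = (-3 : ZMod p) ^ (m - k) := by
      have hsplit : (-3 : ZMod p) ^ m = (-3) ^ (m - k) * (-3) ^ k := by
        rw [← pow_add, Nat.sub_add_cancel hk]
      rw [inv_pow, hsplit, mul_assoc, mul_inv_cancel₀ (pow_ne_zero k hneg3), mul_one]
    rw [← hpow]
    ring
  -- evaluate the right-hand side
  have hCB : ((2 * m).choose m : ZMod p) = (-4 : ZMod p) ^ m := by
    have := hB m hmp
    simpa [← hmdef] using this
  have hone : (-3 : ZMod p) ^ m * S = 1 := by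
    rw [hmul, hCB, ← mul_pow]
    norm_num
    have h4eq : (4 : ZMod p) = 2 ^ 2 := by norm_num
    rw [h4eq, ← pow_mul]
    have h2m' : 2 * m = p - 1 := by omega
    rw [h2m', ZMod.pow_card_sub_one_eq_one h2]
  have hSval : S = ((-3 : ZMod p) ^ m)⁻¹ := eq_inv_of_mul_eq_one_left
    (by rw [mul_comm]; exact hone)
  -- relate to the Legendre symbols
  have hE : ((legendreSym p 3 : ℤ) : ZMod p) = (3 : ZMod p) ^ m := by
    have := legendreSym.eq_pow p 3
    push_cast at this
    rw [this]
  have hL1 : legendreSym p 3 = 1 ∨ legendreSym p 3 = -1 :=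
    legendreSym.eq_one_or_neg_one p (by exact_mod_cast h3)
  have hQR : legendreSym 3 p = (-1 : ℤ) ^ m * legendreSym p 3 := by
    have h := legendreSym.quadratic_reciprocity' (p := p) (q := 3) (by omega) (by norm_num)
    simpa [hmdef] using h
  have hinv3 : ((3 : ZMod p) ^ m)⁻¹ = (3 : ZMod p) ^ m := by
    rw [← hE]
    rcases hL1 with h | h <;> rw [h] <;> norm_num
  have hSfinal : S = (-1 : ZMod p) ^ m * (3 : ZMod p) ^ m := by
    rw [hSval, neg_pow, mul_inv, hinv3]
    congr 1
    rcases Nat.even_or_odd m with h | h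
    · rw [h.neg_one_pow]; norm_num
    · rw [h.neg_one_pow]; norm_num
  rw [hSfinal, hQR]
  push_cast
  rw [hE]
end

section
/- For any prime p > 3, C(2p−2, p−1) ≡ −p − 2p^2 (mod p^3). -/
/-! Write `f = (X + 1)(X + 2) ⋯ (X + (p - 1))`, i.e. `(ascPochhammer ℤ (p - 1)).comp (X + 1)`.
Wolstenholme's congruence `C(2p - 1, p - 1) ≡ 1 (mod p³)` is `f(p) ≡ f(0) (mod p³)`. Modulo `p`,
`f` is `X ^ (p - 1) - 1` (both sides vanish on `(ZMod p)ˣ` and equal `-1` at `0` by Wilson), so for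
`p > 3` its coefficient of `X²` is divisible by `p`. Reversing the order of the factors shows
`f(-p) = f(0)`, and comparing the expansions of `f(p)` and `f(-p)` to second order in `p` gives
`f(p) ≡ f(0)`. Finally `(2p - 1) C(2p - 2, p - 1) = p C(2p - 1, p - 1) ≡ p`, and `2p - 1` is
invertible modulo `p³`. -/

open Finset Polynomial Nat

theorem Polynomial.pow_dvd_eval_sub_sum_range {R : Type*} [CommRing R] (f : R[X]) (x : R)
    (m : ℕ) : x ^ m ∣ f.eval x - ∑ k ∈ range m, f.coeff k * x ^ k := by
  rw [eval_eq_sum_range' (n := m + (f.natDegree + 1)) (by omega), sum_range_add,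
    add_sub_cancel_left]
  exact dvd_sum fun k _ => Dvd.intro (f.coeff (m + k) * x ^ k) (by ring)

theorem Polynomial.pow_three_dvd_eval_sub_eval_zero {R : Type*} [CommRing R] (f : R[X]) {x : R}
    (hsymm : f.eval (-x) = f.eval 0) (hcoeff : x ∣ f.coeff 2) :
    x ^ 3 ∣ f.eval x - f.eval 0 := by
  obtain ⟨u, hu⟩ := f.pow_dvd_eval_sub_sum_range x 3
  obtain ⟨v, hv⟩ := f.pow_dvd_eval_sub_sum_range (-x) 3
  obtain ⟨w, hw⟩ := hcoeff
  rw [hsymm] at hv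
  simp only [sum_range_succ, sum_range_zero, ← coeff_zero_eq_eval_zero] at hu hv ⊢
  exact ⟨u - v + 2 * w, by linear_combination hu + hv + 2 * x ^ 2 * hw⟩

theorem Int.ModEq.cancel_left_of_isCoprime {m c a b : ℤ} (hc : IsCoprime m c)
    (h : c * a ≡ c * b [ZMOD m]) : a ≡ b [ZMOD m] := by
  rw [Int.modEq_iff_dvd, ← mul_sub] at *
  exact hc.dvd_of_dvd_mul_left h

theorem ascPochhammer_comp_X_add_one_eval_neg_sub {R : Type*} [CommRing R] (n : ℕ) (x : R) :
    ((ascPochhammer R n).comp (X + 1)).eval (-x - (n + 1)) =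
      (-1) ^ n * ((ascPochhammer R n).comp (X + 1)).eval x := by
  simp only [eval_comp, eval_add, eval_X, eval_one]
  rw [show -x - (n + 1) + 1 = -(x + n) by ring, ascPochhammer_eval_neg_eq_descPochhammer,
    descPochhammer_eval_eq_ascPochhammer, add_sub_cancel_right]

theorem ZMod.ascPochhammer_comp_X_add_one_eq_X_pow_sub_one (p : ℕ) [Fact p.Prime] :
    (ascPochhammer (ZMod p) (p - 1)).comp (X + 1) = X ^ (p - 1) - 1 := by
  have hp := (Fact.out : p.Prime).two_le
  refine eq_of_natDegree_lt_card_of_eval_eq' _ _ univ (fun a _ => ?_) ?_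
  · simp only [eval_comp, eval_add, eval_sub, eval_pow, eval_X, eval_one]
    rcases eq_or_ne a 0 with rfl | ha
    · rw [zero_add, ascPochhammer_eval_one, ZMod.wilsons_lemma, zero_pow (by omega), zero_sub]
    · rw [ZMod.pow_card_sub_one_eq_one ha, sub_self, ascPochhammer_eval_eq_zero_iff]
      have hval : 0 < a.val := (ZMod.val_pos).2 ha
      refine ⟨p - 1 - a.val, by omega, ?_⟩
      rw [Nat.cast_sub (by have := a.val_lt; omega), Nat.cast_sub (by omega : 1 ≤ p),
        ZMod.natCast_self, ZMod.natCast_zmod_val]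
      ring
  · rw [← C_1, natDegree_comp, natDegree_X_add_C, natDegree_X_pow_sub_C]
    simp only [ascPochhammer_natDegree, mul_one, max_self, Finset.card_univ, ZMod.card]
    omega

theorem Nat.Prime.dvd_coeff_ascPochhammer_comp_X_add_one {p k : ℕ} (hp : p.Prime) (hk0 : k ≠ 0)
    (hk : k ≠ p - 1) : (p : ℤ) ∣ ((ascPochhammer ℤ (p - 1)).comp (X + 1)).coeff k := by
  have := Fact.mk hp
  rw [← ZMod.intCast_zmod_eq_zero_iff_dvd, ← eq_intCast (Int.castRingHom (ZMod p)), ← coeff_map,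
    Polynomial.map_comp, ascPochhammer_map, Polynomial.map_add, map_X, Polynomial.map_one,
    ZMod.ascPochhammer_comp_X_add_one_eq_X_pow_sub_one]
  simp [coeff_X_pow, coeff_one, hk0, hk]

theorem Nat.Prime.choose_two_mul_sub_one_modEq_one {p : ℕ} (hp : p.Prime) (hp3 : 3 < p) :
    ((2 * p - 1).choose (p - 1) : ℤ) ≡ 1 [ZMOD p ^ 3] := by
  set f := (ascPochhammer ℤ (p - 1)).comp (X + 1)
  have hsymm : f.eval (-(p : ℤ)) = f.eval 0 := by
    have := ascPochhammer_comp_X_add_one_eval_neg_sub (p - 1) (0 : ℤ)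
    rwa [Nat.cast_sub hp.one_le, Nat.cast_one, sub_add_cancel, neg_zero, zero_sub,
      (hp.even_sub_one (by omega)).neg_one_pow, one_mul] at this
  have hdvd : (p : ℤ) ^ 3 ∣ f.eval (p : ℤ) - f.eval 0 :=
    f.pow_three_dvd_eval_sub_eval_zero hsymm
      (hp.dvd_coeff_ascPochhammer_comp_X_add_one two_ne_zero (by omega))
  have heval_p : f.eval (p : ℤ) = (p - 1)! * (2 * p - 1).choose (p - 1) := by
    rw [eval_comp, eval_add, eval_X, eval_one, ← Nat.cast_add_one,
      ascPochhammer_nat_eq_natCast_ascFactorial, Nat.ascFactorial_eq_factorial_mul_choose,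
      show p + (p - 1) = 2 * p - 1 by omega, Nat.cast_mul]
  have heval_0 : f.eval 0 = (p - 1)! := by
    rw [eval_comp, eval_add, eval_X, eval_one, zero_add, ascPochhammer_eval_one]
  refine Int.ModEq.cancel_left_of_isCoprime (c := (p - 1)!) ?_ ?_
  · exact (Nat.isCoprime_iff_coprime.2 (hp.coprime_factorial_of_lt (by omega))).pow_left
  · rw [mul_one, ← heval_p, ← heval_0]
    exact (Int.modEq_iff_dvd.2 hdvd).symm

theorem Nat.two_mul_sub_one_mul_choose_eq (p : ℕ) :
    (2 * p - 1) * (2 * p - 2).choose (p - 1) = p * (2 * p - 1).choose (p - 1) := by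
  cases p with
  | zero => simp
  | succ n =>
    rw [show 2 * (n + 1) - 1 = 2 * n + 1 by omega, show 2 * (n + 1) - 2 = 2 * n by omega,
      Nat.add_sub_cancel, Nat.add_one_mul_choose_eq, choose_symm_half, mul_comm]

theorem centralBinom_sub_one_mod_p_cubed (p : ℕ) (hp : p.Prime) (hp3 : 3 < p) :
    (((2 * p - 2).choose (p - 1) : ℤ)) ≡ -(p : ℤ) - 2 * (p : ℤ) ^ 2 [ZMOD (p : ℤ) ^ 3] := by
  have hcop : IsCoprime ((p : ℤ) ^ 3) (2 * p - 1) := IsCoprime.pow_left ⟨2, -1, by ring⟩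
  refine Int.ModEq.cancel_left_of_isCoprime hcop ?_
  have hbinom := congrArg (Nat.cast : ℕ → ℤ) (Nat.two_mul_sub_one_mul_choose_eq p)
  push_cast [Nat.cast_sub (by omega : 1 ≤ 2 * p)] at hbinom
  calc (2 * p - 1 : ℤ) * (2 * p - 2).choose (p - 1) = p * (2 * p - 1).choose (p - 1) := hbinom
    _ ≡ p * 1 [ZMOD p ^ 3] := (hp.choose_two_mul_sub_one_modEq_one hp3).mul_left _
    _ = (2 * p - 1) * (-p - 2 * p ^ 2) + p ^ 3 * 4 := by ring
    _ ≡ (2 * p - 1) * (-p - 2 * p ^ 2) + 0 [ZMOD p ^ 3] :=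
      Int.ModEq.add_left _ (Int.modEq_zero_iff_dvd.2 (dvd_mul_right _ _))
    _ = (2 * p - 1) * (-p - 2 * p ^ 2) := add_zero _
end

section
/- For any prime p and integer j with 0 ≤ j ≤ p−1, C(p−1, j) ≡ (−1)^j·(1 − p·H_j) (mod p^2), where H_j is the j-th harmonic number (interpreted p-adically; the denominators in H_j are coprime to p since j ≤ p−1). -/
/-!
Write `C_j = C(n - 1, j)`. The ratio `C_{j+1} / C_j = (n - 1 - j) / (j + 1) = -(1 - n / (j + 1))`
shows, by induction on `j`, that `C_j = (-1)^j ∏_{i ≤ j} (1 - n / i)`; modulo `n^2` the product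
collapses to `1 - n H_j` because `n^2 = 0` there.
-/

open Finset

theorem Nat.cast_choose_succ_mul {R : Type*} [CommRing R] (n k : ℕ) :
    (n.choose (k + 1) : R) * (k + 1) = n.choose k * (n - k) := by
  rcases le_or_gt k n with hkn | hnk
  · exact_mod_cast congrArg (Nat.cast : ℕ → R) (Nat.choose_succ_right_eq n k)
  · simp [Nat.choose_eq_zero_of_lt hnk, Nat.choose_eq_zero_of_lt (Nat.lt_succ_of_lt hnk)]

theorem ZMod.natCast_mul_self_eq_zero (n : ℕ) : (n : ZMod (n ^ 2)) * n = 0 := by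
  rw [← Nat.cast_mul, ← sq, ZMod.natCast_self]

theorem ZMod.cast_choose_pred_eq_of_coprime {n : ℕ} (hn : 0 < n) (j : ℕ)
    (hcop : ∀ i ∈ Icc 1 j, i.Coprime n) :
    (((n - 1).choose j : ℕ) : ZMod (n ^ 2)) =
      (-1) ^ j * (1 - (n : ZMod (n ^ 2)) * ∑ i ∈ Icc 1 j, (i : ZMod (n ^ 2))⁻¹) := by
  induction j with
  | zero => simp
  | succ j ih =>
    set c : ZMod (n ^ 2) := ((j + 1 : ℕ) : ZMod (n ^ 2))
    have hc : IsUnit c := (ZMod.isUnit_iff_coprime _ _).mpr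
      ((hcop (j + 1) (by simp)).pow_right 2)
    have hrec : ((n - 1).choose (j + 1) : ZMod (n ^ 2)) * c =
        (n - 1).choose j * (n - 1 - j) := by
      simpa [c, Nat.cast_sub hn] using Nat.cast_choose_succ_mul (R := ZMod (n ^ 2)) (n - 1) j
    have hH : ∑ i ∈ Icc 1 (j + 1), (i : ZMod (n ^ 2))⁻¹ =
        ∑ i ∈ Icc 1 j, (i : ZMod (n ^ 2))⁻¹ + c⁻¹ := by
      rw [sum_Icc_succ_top (by omega)]
    refine hc.mul_right_cancel ?_
    rw [hrec, ih fun i hi ↦ hcop i (Icc_subset_Icc_right j.le_succ hi), hH]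
    have hcj : c = j + 1 := by push_cast [c]; rfl
    linear_combination (-1 : ZMod (n ^ 2)) ^ j *
      (-(∑ i ∈ Icc 1 j, (i : ZMod (n ^ 2))⁻¹) * ZMod.natCast_mul_self_eq_zero n -
        n * ZMod.mul_inv_of_unit c hc + (1 - n * ∑ i ∈ Icc 1 j, (i : ZMod (n ^ 2))⁻¹) * hcj)

theorem choose_p_sub_one_mod_p_sq (p : ℕ) (hp : p.Prime) (j : ℕ) (hj : j ≤ p - 1) :
    (((p - 1).choose j : ℕ) : ZMod (p ^ 2)) =
      (-1) ^ j * (1 - (p : ZMod (p ^ 2)) * ∑ i ∈ Finset.Icc 1 j, (i : ZMod (p ^ 2))⁻¹) := by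
  refine ZMod.cast_choose_pred_eq_of_coprime hp.pos j fun i hi ↦ ?_
  have ⟨hi1, hij⟩ := mem_Icc.mp hi
  exact (Nat.coprime_of_lt_prime (by omega) (by omega) hp).symm
end

section
/- For any odd prime p and nonnegative integer j with j ≤ (p−1)/2, C((p−1)/2, j)·(−4)^j ≡ C(2j, j) (mod p). -/
/-!
Modulo an odd prime `p`, `(p - 1) / 2 ≡ -1/2`, and `-1/2` choose `j` times `(-4) ^ j` is the
central binomial coefficient `C(2j, j)`. To avoid dividing, we multiply by `j!` and compare
falling factorials: each step multiplies the left side by `-4 (-1/2 - j) = 2 (2j + 1)`, which is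
also the ratio `(j + 1) C(2j + 2, j + 1) / C(2j, j)`. Finally `j!` is invertible mod `p` as `j < p`.
-/

open Nat Polynomial

theorem descPochhammer_eval_mul_neg_four_pow {R : Type*} [CommRing R] {a : R}
    (ha : 2 * a + 1 = 0) (j : ℕ) :
    (descPochhammer R j).eval a * (-4) ^ j = j ! * centralBinom j := by
  induction j with
  | zero => simp
  | succ j ih =>
    have hstep := congrArg (Nat.cast : ℕ → R) (succ_mul_centralBinom_succ j)
    push_cast at hstep
    rw [descPochhammer_succ_eval, factorial_succ, pow_succ]
    push_cast
    linear_combination (-2 * (descPochhammer R j).eval a * (-4) ^ j) * ha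
      + (2 * (2 * j + 1) : R) * ih - (j ! : R) * hstep

theorem ZMod.two_mul_natCast_half_add_one {p : ℕ} (hp : Odd p) :
    2 * (((p - 1) / 2 : ℕ) : ZMod p) + 1 = 0 := by
  obtain ⟨k, rfl⟩ := hp
  have hk : (2 * k + 1 - 1) / 2 = k := by omega
  rw [hk]
  exact_mod_cast ZMod.natCast_self (2 * k + 1)

theorem choose_half_neg_four_pow (p : ℕ) (hp : p.Prime) (hodd : p ≠ 2)
    (j : ℕ) (hj : j ≤ (p - 1) / 2) :
    (((p - 1) / 2).choose j : ZMod p) * (-4 : ZMod p) ^ j = ((2 * j).choose j : ZMod p) := by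
  have := Fact.mk hp
  have hfac : (j ! : ZMod p) ≠ 0 := by
    rw [Ne, ZMod.natCast_eq_zero_iff, hp.dvd_factorial]
    have := hp.two_le
    omega
  have key := descPochhammer_eval_mul_neg_four_pow
    (ZMod.two_mul_natCast_half_add_one (hp.odd_of_ne_two hodd)) j
  rw [descPochhammer_eval_eq_descFactorial, descFactorial_eq_factorial_mul_choose,
    cast_mul, mul_assoc] at key
  exact mul_left_cancel₀ hfac key
end

section
/- Define F(n,k) = C(n,k)·C(2k,k)·((m−1)/4)^k/m^n, G_1(n,k) = ((2kn+k+n)/((k+1)·m^n))·C(n,k)·C(2k,k)·((m−1)/4)^k, and G_2(n,k) = (2k/m^{n+1})·C(n+1,k)·C(2k,k)·((m−1)/4)^k. Then for all nonnegative integers n, k (with m a nonzero parameter): F(n,k) = (G_1(n+1,k) − G_1(n,k)) + (G_2(n,k+1) − G_2(n,k)). -/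
/-- `F(n,k) = C(n,k)·C(2k,k)·((m−1)/4)^k / m^n`. -/
def FF (m : ℚ) (n k : ℕ) : ℚ :=
  (n.choose k : ℚ) * (2 * k).choose k * ((m - 1) / 4) ^ k / m ^ n
/-- `G₁(n,k) = ((2kn+k+n)/((k+1)·m^n))·C(n,k)·C(2k,k)·((m−1)/4)^k`. -/
def G₁ (m : ℚ) (n k : ℕ) : ℚ :=
  ((2 * k * n + k + n : ℚ) / ((k + 1) * m ^ n)) *
    (n.choose k : ℚ) * (2 * k).choose k * ((m - 1) / 4) ^ k
/-- `G₂(n,k) = (2k/m^{n+1})·C(n+1,k)·C(2k,k)·((m−1)/4)^k`. -/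
def G₂ (m : ℚ) (n k : ℕ) : ℚ :=
  ((2 * k : ℚ) / m ^ (n + 1)) * ((n + 1).choose k : ℚ) * (2 * k).choose k * ((m - 1) / 4) ^ k

theorem telescoping_identity (m : ℚ) (hm : m ≠ 0) (n k : ℕ) :
    FF m n k = (G₁ m (n + 1) k - G₁ m n k) + (G₂ m n (k + 1) - G₂ m n k) := by
  have r1 : ((n : ℚ) + 1 - k) * ((n+1).choose k : ℚ) = ((n : ℚ) + 1) * (n.choose k : ℚ) := by
    rcases le_or_gt k (n+1) with hk | hk
    · have h := Nat.choose_mul_succ_eq n k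
      have h2 := congrArg (Nat.cast : ℕ → ℚ) h
      push_cast [Nat.cast_sub hk] at h2
      linarith
    · rw [Nat.choose_eq_zero_of_lt hk, Nat.choose_eq_zero_of_lt (by omega)]
      push_cast; ring
  have r2 : ((k : ℚ) + 1) * ((n+1).choose (k+1) : ℚ) = ((n : ℚ) + 1) * (n.choose k : ℚ) := by
    have h2 := congrArg (Nat.cast : ℕ → ℚ) (Nat.add_one_mul_choose_eq n k)
    push_cast at h2
    linarith
  have r3 : ((k : ℚ) + 1) * ((2*(k+1)).choose (k+1) : ℚ) = 2 * (2*(k : ℚ)+1) * ((2*k).choose k : ℚ) := by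
    have h := Nat.succ_mul_centralBinom_succ k
    simp only [Nat.centralBinom] at h
    exact_mod_cast congrArg (Nat.cast : ℕ → ℚ) h
  have key : m*((k:ℚ)+1)*(n.choose k:ℚ)*((2*k).choose k : ℚ) = (2*(k:ℚ)+1)*((n:ℚ)+1-k)*((n+1).choose k : ℚ)*((2*k).choose k : ℚ) - m*(2*(k:ℚ)*n+k+n)*(n.choose k : ℚ)*((2*k).choose k : ℚ) + 2*((k:ℚ)+1)^2*((n+1).choose (k+1) : ℚ)*((2*(k+1)).choose (k+1) : ℚ)*((m-1)/4) := by
    linear_combination (-1:ℚ)*((2*(k:ℚ)+1)*((2*k).choose k : ℚ) * r1 + 2*((k:ℚ)+1)*((2*(k+1)).choose (k+1) : ℚ)*((m-1)/4) * r2 + 2*((n:ℚ)+1)*(n.choose k : ℚ)*((m-1)/4) * r3)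
  have e : FF m n k - ((G₁ m (n + 1) k - G₁ m n k) + (G₂ m n (k + 1) - G₂ m n k)) = (m*((k:ℚ)+1)*(n.choose k:ℚ)*((2*k).choose k : ℚ) - ((2*(k:ℚ)+1)*((n:ℚ)+1-k)*((n+1).choose k : ℚ)*((2*k).choose k : ℚ) - m*(2*(k:ℚ)*n+k+n)*(n.choose k : ℚ)*((2*k).choose k : ℚ) + 2*((k:ℚ)+1)^2*((n+1).choose (k+1) : ℚ)*((2*(k+1)).choose (k+1) : ℚ)*((m-1)/4))) * ((m-1)/4)^k / (((k:ℚ)+1)*m^(n+1)) := by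
    have hk2 : ((k : ℚ) + 1) ≠ 0 := by positivity
    simp only [FF, G₁, G₂]
    push_cast
    field_simp
    ring
  simp only [FF, G₁, G₂]
  have hk1 : ((k : ℚ) + 1) ≠ 0 := by positivity
  simp only [FF, G₁, G₂] at e
  rw [← sub_eq_zero, e, key, sub_self, zero_mul, zero_div]
end

section
/- For any prime p > 3, the partial sum Σ_{k=1}^{(p−1)/2} C(2k,k)/k ≡ 0 (mod p). -/
open Finset Polynomial

-- helper: reindex Icc 1 n to range
lemma ps_sum_Icc_one {M : Type*} [AddCommMonoid M] (n : ℕ) (f : ℕ → M) :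
    ∑ k ∈ Finset.Icc 1 n, f k = ∑ k ∈ Finset.range n, f (k+1) := by
  induction n with
  | zero => simp
  | succ n ih => rw [Finset.sum_Icc_succ_top (by omega), ih, Finset.sum_range_succ]

-- helper: parity split
lemma ps_sum_Icc_two {M : Type*} [AddCommMonoid M] (n : ℕ) (f : ℕ → M) :
    ∑ k ∈ Finset.Icc 1 (2*n), f k = ∑ k ∈ Finset.Icc 1 n, (f (2*k-1) + f (2*k)) := by
  induction n with
  | zero => simp
  | succ n ih =>
    rw [Finset.sum_Icc_succ_top (by omega : 1 ≤ n+1)]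
    have h : 2*(n+1) = (2*n+1)+1 := by ring
    rw [h, Finset.sum_Icc_succ_top (by omega), Finset.sum_Icc_succ_top (by omega), ih]
    have h1 : 2*n+1+1-1 = 2*n+1 := by omega
    rw [h1]
    abel

lemma ps_unit {p a : ℕ} (hp : p.Prime) (h0 : 0 < a) (h1 : a < p) : (a : ZMod p) ≠ 0 := by
  rw [Ne, ZMod.natCast_eq_zero_iff]
  intro h
  exact absurd (Nat.le_of_dvd h0 h) (by omega)

lemma ps_choose_neg_one {p : ℕ} (hp : p.Prime) : ∀ j, j < p → (((p-1).choose j : ℕ) : ZMod p) = (-1)^j := by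
  intro j hj
  induction j with
  | zero => simp
  | succ j ih =>
    have hj' : j < p := by omega
    have h1 : (p-1).choose j + (p-1).choose (j+1) = p.choose (j+1) := by
      have : p - 1 + 1 = p := by omega
      conv_rhs => rw [← this]
      rw [Nat.choose_succ_succ]
    have h2 : ((p.choose (j+1) : ℕ) : ZMod p) = 0 := by
      rw [ZMod.natCast_eq_zero_iff]
      exact hp.dvd_choose_self (by omega) hj
    have h3 := congrArg (fun x : ℕ => (x : ZMod p)) h1
    push_cast at h3
    rw [ih hj'] at h3
    rw [h2] at h3
    have : ((p-1).choose (j+1) : ZMod p) = -(-1)^j := by linear_combination h3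
    rw [this]
    ring
open Finset Polynomial

-- L1: central binomial ≡ (-4)^k * C(m,k)
lemma ps_central {p m : ℕ} (hp : p.Prime) (hm : 2*m+1 = p) :
    ∀ k, k ≤ m → (((2*k).choose k : ℕ) : ZMod p) = (-4)^k * ((m.choose k : ℕ) : ZMod p) := by
  haveI : Fact p.Prime := ⟨hp⟩
  intro k hk
  induction k with
  | zero => simp
  | succ k ih =>
    have hk' : k ≤ m := by omega
    have ihh := ih hk'
    have hk1 : ((k+1 : ℕ) : ZMod p) ≠ 0 := ps_unit hp (by omega) (by omega)
    have hnat : (k + 1) * (k + 1).centralBinom = 2 * (2 * k + 1) * k.centralBinom :=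
      Nat.succ_mul_centralBinom_succ k
    rw [Nat.centralBinom, Nat.centralBinom] at hnat
    have hc := congrArg (fun x : ℕ => (x : ZMod p)) hnat
    push_cast at hc
    have hch : m.choose (k+1) * (k+1) = m.choose k * (m - k) := Nat.choose_succ_right_eq m k
    have hc2 := congrArg (fun x : ℕ => (x : ZMod p)) hch
    push_cast [Nat.cast_sub hk'] at hc2
    have h2m : (2 * (m : ZMod p)) = -1 := by
      have : ((2*m+1 : ℕ) : ZMod p) = 0 := by rw [hm]; exact ZMod.natCast_self p
      push_cast at this
      linear_combination this
    apply mul_left_cancel₀ hk1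
    push_cast
    rw [show ((2:ℕ) * (k+1)) = 2*k+1+1 by ring] at hc
    push_cast at hc
    calc ((k:ZMod p)+1) * ((2*k+1+1).choose (k+1) : ZMod p)
        = 2 * (2*(k:ZMod p)+1) * ((2*k).choose k : ZMod p) := by linear_combination hc
      _ = 2 * (2*(k:ZMod p)+1) * ((-4)^k * (m.choose k : ZMod p)) := by rw [ihh]
      _ = ((k:ZMod p)+1) * ((-4)^(k+1) * (m.choose (k+1) : ZMod p)) := by
          have : ((m:ZMod p) - k) * (-4) = 2 * (2*(k:ZMod p)+1) := by linear_combination -2 * h2m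
          calc 2 * (2*(k:ZMod p)+1) * ((-4)^k * (m.choose k : ZMod p))
              = ((m.choose k : ZMod p) * ((m:ZMod p) - k)) * (-4)^(k+1) := by
                rw [← this]; ring
            _ = ((m.choose (k+1) : ZMod p) * ((k:ZMod p)+1)) * (-4)^(k+1) := by rw [← hc2]
            _ = ((k:ZMod p)+1) * ((-4)^(k+1) * (m.choose (k+1) : ZMod p)) := by ring
open Finset Polynomial

-- L2: sum C(n,k) x^k /k = sum ((1+x)^j - 1)/j in ZMod p, for n < p
lemma ps_binom {p : ℕ} (hp : p.Prime) :
    ∀ n, n < p → ∀ x : ZMod p,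
    ∑ k ∈ Finset.Icc 1 n, ((n.choose k : ℕ) : ZMod p) * x^k * (k : ZMod p)⁻¹
      = ∑ j ∈ Finset.Icc 1 n, ((1+x)^j - 1) * (j : ZMod p)⁻¹ := by
  haveI : Fact p.Prime := ⟨hp⟩
  intro n hn
  induction n with
  | zero => simp
  | succ n ih =>
    intro x
    have hn' : n < p := by omega
    -- split choose
    have step1 : ∑ k ∈ Finset.Icc 1 (n+1), ((n+1).choose k : ZMod p) * x^k * (k : ZMod p)⁻¹
        = (∑ k ∈ Finset.Icc 1 (n+1), ((n.choose k : ℕ) : ZMod p) * x^k * (k : ZMod p)⁻¹)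
        + ∑ k ∈ Finset.Icc 1 (n+1), ((n.choose (k-1) : ℕ) : ZMod p) * x^k * (k : ZMod p)⁻¹ := by
      rw [← Finset.sum_add_distrib]
      apply Finset.sum_congr rfl
      intro k hk
      simp only [Finset.mem_Icc] at hk
      have hk1 : k = (k-1)+1 := by omega
      rw [hk1, Nat.choose_succ_succ]
      push_cast
      ring
    -- first sum: top term is 0
    have step2 : ∑ k ∈ Finset.Icc 1 (n+1), ((n.choose k : ℕ) : ZMod p) * x^k * (k : ZMod p)⁻¹
        = ∑ k ∈ Finset.Icc 1 n, ((n.choose k : ℕ) : ZMod p) * x^k * (k : ZMod p)⁻¹ := by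
      rw [Finset.sum_Icc_succ_top (by omega)]
      rw [Nat.choose_succ_self]
      push_cast
      ring
    -- second sum: C(n,k-1)/k = C(n+1,k)/(n+1)
    have hsucc : ((n:ZMod p)+1) ≠ 0 := by
      have := ps_unit hp (show 0 < n+1 by omega) hn
      push_cast at this; exact this
    have step3 : ∑ k ∈ Finset.Icc 1 (n+1), ((n.choose (k-1) : ℕ) : ZMod p) * x^k * (k : ZMod p)⁻¹
        = (((n:ZMod p))+1)⁻¹ * ∑ k ∈ Finset.Icc 1 (n+1), (((n+1).choose k : ℕ) : ZMod p) * x^k := by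
      rw [Finset.mul_sum]
      apply Finset.sum_congr rfl
      intro k hk
      simp only [Finset.mem_Icc] at hk
      have hku : ((k : ℕ) : ZMod p) ≠ 0 := ps_unit hp (by omega) (by omega)
      have hnat : (n+1) * n.choose (k-1) = (n+1).choose k * k := by
        have := Nat.add_one_mul_choose_eq n (k-1)
        rw [show k-1+1 = k by omega] at this
        exact this
      have hc := congrArg (fun y : ℕ => (y : ZMod p)) hnat
      push_cast at hc
      field_simp
      linear_combination x^k * hc
    -- binomial theorem
    have step4 : ∑ k ∈ Finset.Icc 1 (n+1), (((n+1).choose k : ℕ) : ZMod p) * x^k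
        = (1+x)^(n+1) - 1 := by
      have hb : (x + 1)^(n+1) = ∑ k ∈ Finset.range (n+2), x^k * 1^((n+1)-k) * ((n+1).choose k : ℕ) :=
        add_pow x 1 (n+1)
      have : ∑ k ∈ Finset.range (n+2), (x^k * 1^((n+1)-k) * (((n+1).choose k : ℕ) : ZMod p))
          = (∑ k ∈ Finset.range (n+1), x^(k+1) * 1^((n+1)-(k+1)) * (((n+1).choose (k+1) : ℕ) : ZMod p)) + 1 := by
        rw [Finset.sum_range_succ']
        simp
      rw [this] at hb
      rw [ps_sum_Icc_one]
      have : ∑ k ∈ Finset.range (n+1), (((n+1).choose (k+1) : ℕ) : ZMod p) * x^(k+1)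
          = ∑ k ∈ Finset.range (n+1), x^(k+1) * 1^((n+1)-(k+1)) * (((n+1).choose (k+1) : ℕ) : ZMod p) := by
        apply Finset.sum_congr rfl; intro k _; rw [one_pow]; ring
      rw [this]
      have hx : (1+x)^(n+1) = (x+1)^(n+1) := by ring_nf
      rw [hx, hb]
      ring
    rw [step1, step2, step3, step4, ih hn' x, Finset.sum_Icc_succ_top (by omega)]
    push_cast
    ring
open Finset Polynomial

lemma ps_unit2 {p a : ℕ} (hp : p.Prime) (h0 : 0 < a) (h1 : a < p) : IsUnit ((a : ℕ) : ZMod (p^2)) := by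
  rw [ZMod.isUnit_iff_coprime]
  apply Nat.Coprime.pow_right
  rcases Nat.coprime_or_dvd_of_prime hp a with h | h
  · exact h.symm
  · exact absurd (Nat.le_of_dvd h0 h) (by omega)

lemma ps_inv_unique {n : ℕ} {a b : ZMod n} (hu : IsUnit a) (h : a * b = 1) : a⁻¹ = b := by
  have := ZMod.inv_mul_of_unit a hu
  calc a⁻¹ = a⁻¹ * (a * b) := by rw [h, mul_one]
    _ = (a⁻¹ * a) * b := by ring
    _ = b := by rw [this, one_mul]

lemma ps_pmul {p : ℕ} (hp : p.Prime) (a : ℤ) (h : ((a : ℤ) : ZMod p) = 0) :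
    (p : ZMod (p^2)) * ((a : ℤ) : ZMod (p^2)) = 0 := by
  rw [ZMod.intCast_zmod_eq_zero_iff_dvd] at h
  obtain ⟨c, hc⟩ := h
  have : (p : ℤ) * a = (p^2 : ℕ) * c := by rw [hc]; push_cast; ring
  calc (p : ZMod (p^2)) * ((a : ℤ) : ZMod (p^2)) = (((p : ℤ) * a : ℤ) : ZMod (p^2)) := by push_cast; ring
    _ = ((((p^2 : ℕ) : ℤ) * c : ℤ) : ZMod (p^2)) := by rw [this]
    _ = 0 := by
        push_cast
        rw [show ((p:ZMod (p^2))^2 : ZMod (p^2)) = ((p^2 : ℕ) : ZMod (p^2)) by push_cast; ring,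
           ZMod.natCast_self]
        ring

-- C(p,j) = p * (-1)^(j-1) * j⁻¹ in ZMod p²
lemma ps_choose_p {p : ℕ} (hp : p.Prime) {j : ℕ} (h1 : 1 ≤ j) (h2 : j ≤ p - 1) :
    ((p.choose j : ℕ) : ZMod (p^2)) = (p : ZMod (p^2)) * (-1)^(j-1) * ((j : ℕ) : ZMod (p^2))⁻¹ := by
  have hp1 : 1 < p := hp.one_lt
  have hju : IsUnit ((j : ℕ) : ZMod (p^2)) := ps_unit2 hp (by omega) (by omega)
  have hnat : p.choose j * j = p * (p-1).choose (j-1) := by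
    have := Nat.add_one_mul_choose_eq (p-1) (j-1)
    rw [show p-1+1 = p by omega, show j-1+1 = j by omega] at this
    omega
  -- key mod p² fact: p * C(p-1,j-1) = p * (-1)^(j-1)
  have hkey : (p : ZMod (p^2)) * (((p-1).choose (j-1) : ℕ) : ZMod (p^2)) = (p : ZMod (p^2)) * (-1)^(j-1) := by
    have hmodp : ((((p-1).choose (j-1) : ℕ) : ℤ) - (-1)^(j-1) : ZMod p) = 0 := by
      push_cast
      rw [ps_choose_neg_one hp (j-1) (by omega)]
      ring
    have := ps_pmul hp ((((p-1).choose (j-1) : ℕ) : ℤ) - (-1)^(j-1)) (by push_cast at hmodp ⊢; exact hmodp)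
    push_cast at this
    linear_combination this
  -- multiply target by j
  have hinv : ((j : ℕ) : ZMod (p^2)) * ((j : ℕ) : ZMod (p^2))⁻¹ = 1 := ZMod.mul_inv_of_unit _ hju
  have hc := congrArg (fun x : ℕ => (x : ZMod (p^2))) hnat
  push_cast at hc
  calc ((p.choose j : ℕ) : ZMod (p^2))
      = ((p.choose j : ℕ) : ZMod (p^2)) * (((j : ℕ) : ZMod (p^2)) * ((j : ℕ) : ZMod (p^2))⁻¹) := by
        rw [hinv, mul_one]
    _ = (((p.choose j * j : ℕ) : ZMod (p^2))) * ((j : ℕ) : ZMod (p^2))⁻¹ := by push_cast; ring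
    _ = ((p : ZMod (p^2)) * (((p-1).choose (j-1) : ℕ) : ZMod (p^2))) * ((j : ℕ) : ZMod (p^2))⁻¹ := by
        push_cast; rw [hc]
    _ = (p : ZMod (p^2)) * (-1)^(j-1) * ((j : ℕ) : ZMod (p^2))⁻¹ := by rw [hkey]
open Finset Polynomial

-- master identity: p * F(t) = 1 - t^p - (1-t)^p
lemma ps_master {p : ℕ} (hp : p.Prime) (hodd : p % 2 = 1) {B : Type*} [CommRing B]
    (ι : ZMod (p^2) →+* B) (t : B) :
    (p : B) * ∑ j ∈ Finset.Icc 1 (p-1), ι (((j : ℕ) : ZMod (p^2))⁻¹) * t^j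
      = 1 - t^p - (1-t)^p := by
  have hp1 : 1 < p := hp.one_lt
  obtain ⟨n, hpn⟩ : ∃ n, p = n + 1 := ⟨p-1, by omega⟩
  have hb : (1-t)^p = ∑ j ∈ Finset.range (p+1), (-t)^j * 1^(p-j) * ((p.choose j : ℕ) : B) := by
    rw [show (1-t) = -t + 1 by ring, add_pow]
  rw [show p + 1 = (n+1)+1 by omega] at hb
  rw [Finset.sum_range_succ, Finset.sum_range_succ'] at hb
  have htop : (-t)^(n+1) * 1^(p-(n+1)) * ((p.choose (n+1) : ℕ) : B) = -(t^p) := by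
    rw [← hpn, Nat.choose_self, Odd.neg_pow (Nat.odd_iff.mpr hodd)]
    push_cast
    ring
  have hbot : (-t)^0 * 1^(p-0) * ((p.choose 0 : ℕ) : B) = 1 := by simp
  rw [htop, hbot] at hb
  have hmid : ∑ j ∈ Finset.range n, (-t)^(j+1) * 1^(p-(j+1)) * ((p.choose (j+1) : ℕ) : B)
      = - ((p : B) * ∑ j ∈ Finset.Icc 1 (p-1), ι (((j : ℕ) : ZMod (p^2))⁻¹) * t^j) := by
    rw [show p - 1 = n by omega, ps_sum_Icc_one, Finset.mul_sum, ← Finset.sum_neg_distrib]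
    apply Finset.sum_congr rfl
    intro j hj
    simp only [Finset.mem_range] at hj
    have hchoose : ((p.choose (j+1) : ℕ) : B) = ι ((p.choose (j+1) : ℕ) : ZMod (p^2)) := by
      rw [map_natCast]
    rw [hchoose, ps_choose_p hp (by omega) (by omega)]
    rw [map_mul, map_mul, map_natCast, map_pow, map_neg, map_one]
    have hsign : (-t)^(j+1) * (-1 : B)^(j+1-1) = -(t^(j+1)) := by
      rw [neg_pow]
      rw [show j+1-1 = j by omega]
      rw [show ((-1:B)^(j+1) * t^(j+1)) * (-1:B)^j = (-1:B)^(j+1+j) * t^(j+1) by rw [pow_add]; ring]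
      rw [show j+1+j = 2*j+1 by omega, pow_succ, pow_mul]
      norm_num
    calc (-t)^(j+1) * 1^(p-(j+1)) * ((p : B) * (-1)^(j+1-1) * ι (((j+1 : ℕ) : ZMod (p^2))⁻¹))
        = ((-t)^(j+1) * (-1 : B)^(j+1-1)) * ((p:B) * ι (((j+1 : ℕ) : ZMod (p^2))⁻¹)) := by
          push_cast
          ring
      _ = -((p:B) * (ι (((j+1 : ℕ) : ZMod (p^2))⁻¹) * t^(j+1))) := by rw [hsign]; ring
  rw [hmid] at hb
  linear_combination hb
open Finset Polynomial

-- even part: F(t) + F(-t) = G(t*t)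
lemma ps_even {p m : ℕ} (hp : p.Prime) (hm : 2*m+1 = p) {B : Type*} [CommRing B]
    (ι : ZMod (p^2) →+* B) (t : B) :
    (∑ j ∈ Finset.Icc 1 (p-1), ι (((j : ℕ) : ZMod (p^2))⁻¹) * t^j)
      + ∑ j ∈ Finset.Icc 1 (p-1), ι (((j : ℕ) : ZMod (p^2))⁻¹) * (-t)^j
    = ∑ k ∈ Finset.Icc 1 m, ι (((k : ℕ) : ZMod (p^2))⁻¹) * (t*t)^k := by
  rw [← Finset.sum_add_distrib, show p - 1 = 2*m by omega, ps_sum_Icc_two]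
  apply Finset.sum_congr rfl
  intro k hk
  simp only [Finset.mem_Icc] at hk
  have hodd : Odd (2*k-1) := Nat.odd_iff.mpr (by omega)
  have heven : Even (2*k) := even_two_mul k
  rw [Odd.neg_pow hodd, Even.neg_pow heven]
  have hu2k : IsUnit (((2*k : ℕ) : ℕ) : ZMod (p^2)) := ps_unit2 hp (by omega) (by omega)
  have huk : IsUnit (((k : ℕ) : ℕ) : ZMod (p^2)) := ps_unit2 hp (by omega) (by omega)
  have hinv : (((k : ℕ) : ZMod (p^2)))⁻¹ = (((2*k : ℕ) : ZMod (p^2)))⁻¹ * 2 := by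
    apply ps_inv_unique huk
    calc ((k : ℕ) : ZMod (p^2)) * ((((2*k : ℕ) : ZMod (p^2)))⁻¹ * 2)
        = (((2*k : ℕ) : ZMod (p^2)))⁻¹ * ((2*k : ℕ) : ZMod (p^2)) := by push_cast; ring
      _ = 1 := ZMod.inv_mul_of_unit _ hu2k
  rw [hinv, map_mul, map_ofNat]
  rw [show t*t = t^2 by ring, ← pow_mul]
  ring
open Finset Polynomial

lemma ps_Bside {p m : ℕ} (hp : p.Prime) (hp3 : 3 < p) (hm : 2*m+1 = p) :
    (p : ZMod (p^2)) * ((∑ k ∈ Finset.Icc 1 m, (((k : ℕ) : ZMod (p^2)))⁻¹ * (-3 : ZMod (p^2))^k)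
       - ∑ k ∈ Finset.Icc 1 m, (((k : ℕ) : ZMod (p^2)))⁻¹) = 0 := by
  haveI : Fact (1 < p^2) := ⟨by nlinarith⟩
  haveI : Nontrivial (ZMod (p^2)) := ZMod.nontrivial _
  have hoddp : Odd p := hp.odd_of_ne_two (by omega)
  have hodd : p % 2 = 1 := Nat.odd_iff.mp hoddp
  set q : Polynomial (ZMod (p^2)) := X^2 + X + 1 with hq
  have hmonic : q.Monic := by
    have h1 : q = X^2 + (X + C 1) := by rw [hq]; simp [map_one]; ring
    rw [h1]
    apply Polynomial.monic_X_pow_add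
    rw [Polynomial.degree_X_add_C (1 : ZMod (p^2))]
    decide
  set ι : ZMod (p^2) →+* AdjoinRoot q := AdjoinRoot.of q with hι
  set ω : AdjoinRoot q := AdjoinRoot.root q with hωdef
  have hω : ω^2 + ω + 1 = 0 := by
    have := AdjoinRoot.eval₂_root q
    rw [hq] at this
    simpa using this
  have hω3 : ω^3 = 1 := by linear_combination (ω - 1) * hω
  have hinj : Function.Injective ι := by
    rw [injective_iff_map_eq_zero]
    intro a ha
    have h0 : AdjoinRoot.mk q (Polynomial.C a) = 0 := ha
    have h1 := congrArg (AdjoinRoot.modByMonicHom hmonic) h0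
    rw [AdjoinRoot.modByMonicHom_mk, map_zero] at h1
    rw [(Polynomial.modByMonic_eq_self_iff hmonic).mpr ?hdeg] at h1
    · exact Polynomial.C_eq_zero.mp h1
    case hdeg =>
      have hdq : q.degree = 2 := by rw [hq]; compute_degree!
      rw [hdq]
      exact lt_of_le_of_lt Polynomial.degree_C_le (by decide)
  apply hinj
  rw [map_zero, map_mul, map_sub, map_sum, map_sum, map_natCast]
  simp only [map_mul, map_pow, map_neg, map_ofNat]
  -- now in B
  set ζ : AdjoinRoot q := 1 + 2*ω with hζdef
  have hζ : ζ * ζ = -3 := by rw [hζdef]; linear_combination 4*hω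
  have E1 : (∑ k ∈ Finset.Icc 1 m, ι (((k : ℕ) : ZMod (p^2))⁻¹) * (-3 : AdjoinRoot q)^k)
      = (∑ j ∈ Finset.Icc 1 (p-1), ι (((j : ℕ) : ZMod (p^2))⁻¹) * ζ^j)
        + ∑ j ∈ Finset.Icc 1 (p-1), ι (((j : ℕ) : ZMod (p^2))⁻¹) * (-ζ)^j := by
    rw [ps_even hp hm ι ζ, hζ]
  have E2 : (∑ k ∈ Finset.Icc 1 m, ι (((k : ℕ) : ZMod (p^2))⁻¹))
      = (∑ j ∈ Finset.Icc 1 (p-1), ι (((j : ℕ) : ZMod (p^2))⁻¹))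
        + ∑ j ∈ Finset.Icc 1 (p-1), ι (((j : ℕ) : ZMod (p^2))⁻¹) * (-1 : AdjoinRoot q)^j := by
    have := ps_even hp hm ι (1 : AdjoinRoot q)
    simp only [one_pow, mul_one, one_mul] at this
    rw [← this]
  have M1 := ps_master hp hodd ι ζ
  have M2 := ps_master hp hodd ι (-ζ)
  have M3 := ps_master hp hodd ι 1
  have M4 := ps_master hp hodd ι (-1)
  simp only [Odd.neg_pow hoddp, sub_neg_eq_add] at M2 M4
  rw [one_pow, sub_self, zero_pow (show p ≠ 0 by omega)] at M3
  norm_num at M3 M4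
  -- (1-ζ) = -(2ω), (1+ζ) = -(2ω²)
  have hA : (1 - ζ)^p = -(2^p * ω^p) := by
    rw [show (1 : AdjoinRoot q) - ζ = -(2*ω) by rw [hζdef]; ring, Odd.neg_pow hoddp, mul_pow]
  have hB : (1 + ζ)^p = -(2^p * ω^(2*p)) := by
    rw [show (1 : AdjoinRoot q) + ζ = -(2*ω^2) by rw [hζdef]; linear_combination 2*hω,
       Odd.neg_pow hoddp, mul_pow, ← pow_mul]
  have h3 : p % 3 = 1 ∨ p % 3 = 2 := by
    have : ¬ (3 ∣ p) := by
      intro h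
      rcases (Nat.Prime.eq_one_or_self_of_dvd hp 3 h) with h1 | h1 <;> omega
    omega
  have hcyc : ∀ a : ℕ, ω^a = ω^(a % 3) := by
    intro a
    conv_lhs => rw [← Nat.div_add_mod a 3]
    rw [pow_add, pow_mul, hω3, one_pow, one_mul]
  have hzero : (1 : AdjoinRoot q) + ω^p + ω^(2*p) = 0 := by
    rcases h3 with h | h
    · rw [hcyc p, hcyc (2*p), h, show (2*p) % 3 = 2 by omega]
      linear_combination hω
    · rw [hcyc p, hcyc (2*p), h, show (2*p) % 3 = 1 by omega]
      linear_combination hω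
  clear_value ζ ω
  rw [E1, E2]
  linear_combination M1 + M2 - M3 - M4 - hA - hB + (2:AdjoinRoot q)^p * hzero
open Finset Polynomial

lemma ps_transfer {p : ℕ} (hp : p.Prime) (w : ZMod (p^2)) (h : (p : ZMod (p^2)) * w = 0) :
    (ZMod.castHom (dvd_pow_self p two_ne_zero) (ZMod p)) w = 0 := by
  haveI : NeZero (p^2) := ⟨pow_ne_zero 2 hp.ne_zero⟩
  have hw : ((w.val : ℕ) : ZMod (p^2)) = w := ZMod.natCast_rightInverse w
  rw [← hw] at h
  rw [← Nat.cast_mul, ZMod.natCast_eq_zero_iff] at h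
  have hdvd : p ∣ w.val := by
    obtain ⟨c, hc⟩ := h
    refine ⟨c, ?_⟩
    have h2 : p * w.val = p * (p * c) := by rw [hc]; ring
    exact Nat.eq_of_mul_eq_mul_left hp.pos h2
  rw [← hw, map_natCast, ZMod.natCast_eq_zero_iff]
  exact hdvd

theorem sum_centralBinom_div_eq_zero (p : ℕ) (hp : p.Prime) (hp3 : 3 < p) :
    ∑ k ∈ Finset.Icc 1 ((p - 1) / 2), ((2 * k).choose k : ZMod p) * (k : ZMod p)⁻¹ = 0 := by
  haveI : Fact p.Prime := ⟨hp⟩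
  have hoddp : Odd p := hp.odd_of_ne_two (by omega)
  set m : ℕ := (p - 1) / 2 with hmdef
  have hm : 2 * m + 1 = p := by
    obtain ⟨t, ht⟩ := hoddp
    omega
  -- step a+b: rewrite sum via (-4)^k C(m,k)
  have stepa : ∑ k ∈ Finset.Icc 1 m, ((2 * k).choose k : ZMod p) * (k : ZMod p)⁻¹
      = ∑ k ∈ Finset.Icc 1 m, ((m.choose k : ℕ) : ZMod p) * (-4 : ZMod p)^k * (k : ZMod p)⁻¹ := by
    apply Finset.sum_congr rfl
    intro k hk
    simp only [Finset.mem_Icc] at hk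
    rw [ps_central hp hm k hk.2]
    ring
  have stepb := ps_binom hp m (by omega) (-4 : ZMod p)
  have hneg3 : (1 : ZMod p) + (-4) = -3 := by norm_num
  rw [hneg3] at stepb
  rw [stepa, stepb]
  -- step c: split the sum
  have stepc : ∑ j ∈ Finset.Icc 1 m, ((-3 : ZMod p)^j - 1) * (j : ZMod p)⁻¹
      = (∑ j ∈ Finset.Icc 1 m, (j : ZMod p)⁻¹ * (-3 : ZMod p)^j)
        - ∑ j ∈ Finset.Icc 1 m, (j : ZMod p)⁻¹ := by
    rw [← Finset.sum_sub_distrib]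
    apply Finset.sum_congr rfl
    intro j _
    ring
  rw [stepc]
  -- step d: transfer from ZMod p²
  set φ : ZMod (p^2) →+* ZMod p := ZMod.castHom (dvd_pow_self p two_ne_zero) (ZMod p) with hφ
  have h0 := ps_transfer hp _ (ps_Bside hp hp3 hm)
  rw [map_sub, map_sum, map_sum] at h0
  have hφinv : ∀ k ∈ Finset.Icc 1 m, φ (((k : ℕ) : ZMod (p^2))⁻¹) = ((k : ℕ) : ZMod p)⁻¹ := by
    intro k hk
    simp only [Finset.mem_Icc] at hk
    have hu : IsUnit ((k : ℕ) : ZMod (p^2)) := ps_unit2 hp (by omega) (by omega)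
    have h1 : ((k : ℕ) : ZMod (p^2)) * ((k : ℕ) : ZMod (p^2))⁻¹ = 1 := ZMod.mul_inv_of_unit _ hu
    have h2 := congrArg φ h1
    rw [map_mul, map_one, map_natCast] at h2
    exact (inv_eq_of_mul_eq_one_right h2).symm
  have hsum1 : ∑ k ∈ Finset.Icc 1 m, φ ((((k : ℕ) : ZMod (p^2)))⁻¹ * (-3 : ZMod (p^2))^k)
      = ∑ k ∈ Finset.Icc 1 m, ((k : ℕ) : ZMod p)⁻¹ * (-3 : ZMod p)^k := by
    apply Finset.sum_congr rfl
    intro k hk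
    rw [map_mul, map_pow, map_neg, map_ofNat, hφinv k hk]
  have hsum2 : ∑ k ∈ Finset.Icc 1 m, φ ((((k : ℕ) : ZMod (p^2)))⁻¹)
      = ∑ k ∈ Finset.Icc 1 m, ((k : ℕ) : ZMod p)⁻¹ := Finset.sum_congr rfl hφinv
  rw [hsum1, hsum2] at h0
  exact h0
end

section
/- For any prime p > 3, H_{(p−1)/2} ≡ −2·q_p(2) (mod p), where H_{(p−1)/2} is the ((p−1)/2)-th harmonic number and q_p(2) = (2^{p−1}−1)/p is the Fermat quotient. -/
open Finset

/-- `C(p-1, j) ≡ (-1)^j (mod p)` for `j < p`. -/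
lemma choose_sub_one_cast (p : ℕ) (hp : p.Prime) :
    ∀ j, j < p → (((p - 1).choose j : ℕ) : ZMod p) = (-1 : ZMod p) ^ j := by
  intro j
  induction j with
  | zero => simp
  | succ j ih =>
    intro hj
    have hj' : j < p := Nat.lt_of_succ_lt hj
    have hps : p - 1 + 1 = p := Nat.succ_pred_eq_of_pos hp.pos
    have hsucc : p.choose (j + 1) = (p - 1).choose j + (p - 1).choose (j + 1) := by
      conv_lhs => rw [← hps]
      exact Nat.choose_succ_succ' (p - 1) j
    have hdvd : p ∣ p.choose (j + 1) := hp.dvd_choose_self (Nat.succ_ne_zero j) hj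
    have h0 : ((p.choose (j + 1) : ℕ) : ZMod p) = 0 :=
      (ZMod.natCast_eq_zero_iff _ _).mpr hdvd
    rw [hsucc] at h0
    push_cast at h0
    rw [ih hj'] at h0
    have h1 : (((p - 1).choose (j + 1) : ℕ) : ZMod p) = -(-1 : ZMod p) ^ j := by
      linear_combination h0
    rw [h1, pow_succ]
    ring

/-- The sum of inverses of `1..p-1` vanishes mod `p` (pairing `k ↔ p - k`). -/
lemma sum_inv_Icc_eq_zero (p : ℕ) (hp : p.Prime) (hp2 : 2 < p) :
    ∑ k ∈ Finset.Icc 1 (p - 1), ((k : ZMod p)⁻¹ : ZMod p) = 0 := by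
  haveI : Fact p.Prime := ⟨hp⟩
  apply Finset.sum_involution (fun a _ => p - a)
  · intro a ha
    simp only [Finset.mem_Icc] at ha
    have h1 : ((p - a : ℕ) : ZMod p) = -(a : ZMod p) := by
      have hps : (p : ZMod p) = 0 := ZMod.natCast_self p
      push_cast [Nat.cast_sub (by omega : a ≤ p)]
      rw [hps]; ring
    rw [h1, inv_neg]; ring
  · intro a ha _
    simp only [Finset.mem_Icc] at ha
    obtain ⟨t, ht⟩ := hp.odd_of_ne_two (by omega)
    omega
  · intro a ha; simp only [Finset.mem_Icc] at ha ⊢; omega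
  · intro a ha; simp only [Finset.mem_Icc] at ha; omega

theorem harmonic_half_eq_neg_two_fermat_quotient (p : ℕ) (hp : p.Prime) (hp3 : 3 < p) :
    ∑ k ∈ Finset.Icc 1 ((p - 1) / 2), (k : ZMod p)⁻¹ =
      -2 * (((2 ^ (p - 1) - 1) / p : ℤ) : ZMod p) := by
  haveI : Fact p.Prime := ⟨hp⟩
  obtain ⟨t, ht⟩ := hp.odd_of_ne_two (by omega)
  set m : ℕ := (p - 1) / 2 with hm
  have hm2 : p - 1 = 2 * m := by omega
  have hppos : (0 : ℤ) < (p : ℤ) := by exact_mod_cast hp.pos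
  have hpne : ((p : ℤ)) ≠ 0 := by positivity
  -- the Fermat quotient
  set q : ℤ := (2 ^ (p - 1) - 1) / p with hqdef
  have h2ne : (2 : ZMod p) ≠ 0 := by
    intro h
    have h2 : ((2 : ℕ) : ZMod p) = 0 := by exact_mod_cast h
    have h3 := (ZMod.natCast_eq_zero_iff 2 p).mp h2
    have := Nat.le_of_dvd (by norm_num) h3
    omega
  have hdvdq : (p : ℤ) ∣ 2 ^ (p - 1) - 1 := by
    have h1 : ((2 : ZMod p)) ^ (p - 1) = 1 := ZMod.pow_card_sub_one_eq_one h2ne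
    have h2 : (((2 : ℤ) ^ (p - 1) - 1 : ℤ) : ZMod p) = 0 := by push_cast [h1]; ring
    exact (ZMod.intCast_zmod_eq_zero_iff_dvd _ _).mp h2
  have hq : (p : ℤ) * q = 2 ^ (p - 1) - 1 := Int.mul_ediv_cancel' hdvdq
  -- per-term quotients of binomial coefficients
  set c : ℕ → ℤ := fun k => (p.choose k : ℤ) / p with hcdef
  have hc : ∀ k ∈ Finset.Icc 1 (p - 1), (p : ℤ) * c k = (p.choose k : ℤ) := by
    intro k hk
    simp only [Finset.mem_Icc] at hk
    have : (p : ℤ) ∣ (p.choose k : ℤ) := by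
      exact_mod_cast Int.natCast_dvd_natCast.mpr
        (hp.dvd_choose_self (by omega) (by omega))
    exact Int.mul_ediv_cancel' this
  -- sum of binomial coefficients
  have hsumchoose : ∑ k ∈ Finset.Icc 1 (p - 1), (p.choose k : ℤ) = 2 ^ p - 2 := by
    have h1 : ∑ i ∈ Finset.range (p + 1), (p.choose i : ℤ) = 2 ^ p := by
      have := Nat.sum_range_choose p
      exact_mod_cast congrArg (Nat.cast : ℕ → ℤ) this
    have e1 : Finset.Icc 1 (p - 1) = Finset.Ico 1 p := by
      rw [← Finset.Ico_add_one_right_eq_Icc]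
      congr 1
      omega
    have h2 : ∑ i ∈ Finset.range (p + 1), (p.choose i : ℤ)
        = (p.choose 0 : ℤ) + (∑ k ∈ Finset.Icc 1 (p - 1), (p.choose k : ℤ)) + (p.choose p : ℤ) := by
      rw [e1, Finset.range_eq_Ico, Finset.sum_eq_sum_Ico_succ_bot (by omega),
        Finset.sum_Ico_succ_top (by omega : 1 ≤ p)]
      ring
    rw [h2] at h1
    simp only [Nat.choose_zero_right, Nat.choose_self, Nat.cast_one] at h1
    linarith
  -- sum of the quotients equals 2q
  have hcs : ∑ k ∈ Finset.Icc 1 (p - 1), c k = 2 * q := by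
    have h1 : (p : ℤ) * (∑ k ∈ Finset.Icc 1 (p - 1), c k) = (p : ℤ) * (2 * q) := by
      rw [Finset.mul_sum]
      rw [Finset.sum_congr rfl hc, hsumchoose]
      have hpp : (2 : ℤ) ^ p = 2 * 2 ^ (p - 1) := by
        rw [← pow_succ']
        congr 1
        omega
      rw [hpp]
      linarith [hq]
    exact mul_left_cancel₀ hpne h1
  -- each quotient mod p
  have hck : ∀ k ∈ Finset.Icc 1 (p - 1),
      ((c k : ℤ) : ZMod p) = (-1 : ZMod p) ^ (k - 1) * (k : ZMod p)⁻¹ := by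
    intro k hk
    simp only [Finset.mem_Icc] at hk
    have hkne : (k : ZMod p) ≠ 0 := by
      rw [Ne, ZMod.natCast_eq_zero_iff]
      intro h
      have := Nat.le_of_dvd (by omega) h
      omega
    have hkey : (k : ℤ) * c k = ((p - 1).choose (k - 1) : ℤ) := by
      have h1 : p * ((p - 1).choose (k - 1)) = p.choose k * k := by
        have := Nat.add_one_mul_choose_eq (p - 1) (k - 1)
        simp only [Nat.succ_eq_add_one, show p - 1 + 1 = p from (by omega),
          show k - 1 + 1 = k from (by omega)] at this
        exact this
      have h2 : (p : ℤ) * ((k : ℤ) * c k) = (p : ℤ) * ((p - 1).choose (k - 1) : ℤ) := by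
        have hc' := hc k (by simp only [Finset.mem_Icc]; omega)
        calc (p : ℤ) * ((k : ℤ) * c k) = (k : ℤ) * ((p : ℤ) * c k) := by ring
          _ = (k : ℤ) * (p.choose k : ℤ) := by rw [hc']
          _ = (p : ℤ) * ((p - 1).choose (k - 1) : ℤ) := by
              exact_mod_cast congrArg (Nat.cast : ℕ → ℤ)
                (by rw [mul_comm k]; exact h1.symm : k * p.choose k = p * ((p - 1).choose (k - 1)))
      exact mul_left_cancel₀ hpne h2
    have h3 : ((k : ℕ) : ZMod p) * ((c k : ℤ) : ZMod p) = (-1 : ZMod p) ^ (k - 1) := by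
      have := congrArg (Int.cast : ℤ → ZMod p) hkey
      push_cast at this
      rw [this]
      exact_mod_cast choose_sub_one_cast p hp (k - 1) (by omega)
    field_simp at h3 ⊢
    rw [mul_comm] at h3
    rw [mul_comm, h3]
  -- hence 2q ≡ alternating sum
  have halt : ((2 * q : ℤ) : ZMod p)
      = ∑ k ∈ Finset.Icc 1 (p - 1), (-1 : ZMod p) ^ (k - 1) * (k : ZMod p)⁻¹ := by
    rw [← hcs]
    push_cast
    exact Finset.sum_congr rfl hck
  -- split alternating sum by parity
  have hsplit : ∀ k ∈ Finset.Icc 1 (p - 1),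
      (-1 : ZMod p) ^ (k - 1) * (k : ZMod p)⁻¹
        = (k : ZMod p)⁻¹ - 2 * (if k % 2 = 0 then (k : ZMod p)⁻¹ else 0) := by
    intro k hk
    simp only [Finset.mem_Icc] at hk
    rcases Nat.even_or_odd k with he | ho
    · have : Odd (k - 1) := by
        obtain ⟨a, rfl⟩ := he
        exact ⟨a - 1, by omega⟩
      rw [this.neg_one_pow, if_pos (Nat.even_iff.mp he)]
      ring
    · have : Even (k - 1) := by
        obtain ⟨a, rfl⟩ := ho
        exact ⟨a, by omega⟩
      rw [this.neg_one_pow, if_neg (by have := Nat.odd_iff.mp ho; omega)]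
      ring
  -- even part reindexed
  have heven : ∑ k ∈ (Finset.Icc 1 (p - 1)).filter (fun k => k % 2 = 0), (k : ZMod p)⁻¹
      = ∑ j ∈ Finset.Icc 1 m, ((2 * j : ℕ) : ZMod p)⁻¹ := by
    apply Finset.sum_nbij' (fun k => k / 2) (fun j => 2 * j)
    · intro a ha
      simp only [Finset.mem_filter, Finset.mem_Icc] at ha
      simp only [Finset.mem_Icc]
      omega
    · intro a ha
      simp only [Finset.mem_Icc] at ha
      simp only [Finset.mem_filter, Finset.mem_Icc]
      omega
    · intro a ha
      simp only [Finset.mem_filter, Finset.mem_Icc] at ha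
      omega
    · intro a ha
      simp only [Finset.mem_Icc] at ha
      omega
    · intro a ha
      simp only [Finset.mem_filter, Finset.mem_Icc] at ha
      have h2a : 2 * (a / 2) = a := by omega
      rw [h2a]
  have heven2 : ∑ j ∈ Finset.Icc 1 m, ((2 * j : ℕ) : ZMod p)⁻¹
      = (2 : ZMod p)⁻¹ * ∑ j ∈ Finset.Icc 1 m, (j : ZMod p)⁻¹ := by
    rw [Finset.mul_sum]
    refine Finset.sum_congr rfl (fun j hj => ?_)
    push_cast
    rw [mul_inv]
  -- put it together
  have hzero := sum_inv_Icc_eq_zero p hp (by omega)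
  have hmain : ((2 * q : ℤ) : ZMod p) = - ∑ j ∈ Finset.Icc 1 m, (j : ZMod p)⁻¹ := by
    rw [halt, Finset.sum_congr rfl hsplit, Finset.sum_sub_distrib, hzero,
      ← Finset.mul_sum, ← Finset.sum_filter, heven, heven2]
    rw [← mul_assoc, mul_inv_cancel₀ h2ne]
    ring
  push_cast at hmain
  linear_combination hmain
end
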